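/- arXiv:2402.18810 — 5 statements merged into one kernel-verified Lean document; each statement's English description precedes it below -/
import Mathlib

section
/- Suppose all P ∈ 𝒫 are absolutely continuous with respect to a probability measure μ. Then all elements of 𝒫_eff are also absolutely continuous with respect to μ, and, identifying measures with their μ-densities, 𝒫_eff is the smallest subset of the nonnegative measurable functions modulo μ-a.e. equality that contains the densities of 𝒫, is convex, is solid (contains every nonnegative function dominated μ-a.e. by one of its members), and is closed under convergence in μ-probability. -/
open MeasureTheory ENNReal Filter Set Topology

variable {Ω : Type*} [MeasurableSpace Ω]

/-- `X` is an e-variable for the null hypothesis `Pfam`. -/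
def IsEVar (Pfam : Set (Measure Ω)) (X : Ω → ℝ≥0∞) : Prop :=
  Measurable X ∧ ∀ P ∈ Pfam, ∫⁻ ω, X ω ∂P ≤ 1

/-- The effective null hypothesis. -/
def Peff (Pfam : Set (Measure Ω)) : Set (Measure Ω) :=
  {P | IsFiniteMeasure P ∧ ∀ X, IsEVar Pfam X → ∫⁻ ω, X ω ∂P ≤ 1}

/-- Convergence in `μ`-measure for `[0,∞]`-valued functions (the distance being
the symmetric truncated difference). -/
def TendInMeasure (μ : Measure Ω) (f : ℕ → Ω → ℝ≥0∞) (g : Ω → ℝ≥0∞) : Prop :=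
  ∀ ε : ℝ≥0∞, 0 < ε →
    Tendsto (fun n => μ {ω | ε ≤ (f n ω - g ω) + (g ω - f n ω)}) atTop (𝓝 0)

/-- The set of `μ`-densities of members of the effective null. -/
def densSet (Pfam : Set (Measure Ω)) (μ : Measure Ω) : Set (Ω → ℝ≥0∞) :=
  {f | Measurable f ∧ μ.withDensity f ∈ Peff Pfam}

/-- A set of densities is convex. -/
def ConvexD (C : Set (Ω → ℝ≥0∞)) : Prop :=
  ∀ f ∈ C, ∀ g ∈ C, ∀ t : ℝ≥0∞, t ≤ 1 → (fun ω => t * f ω + (1 - t) * g ω) ∈ C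

/-- A set of densities is solid (modulo `μ`-a.e. domination). -/
def SolidD (μ : Measure Ω) (C : Set (Ω → ℝ≥0∞)) : Prop :=
  ∀ f ∈ C, ∀ g : Ω → ℝ≥0∞, Measurable g → g ≤ᵐ[μ] f → g ∈ C

/-- A set of densities is closed under convergence in `μ`-measure. -/
def ClosedD (μ : Measure Ω) (C : Set (Ω → ℝ≥0∞)) : Prop :=
  ∀ f : ℕ → Ω → ℝ≥0∞, (∀ n, f n ∈ C) →
    ∀ g : Ω → ℝ≥0∞, Measurable g → TendInMeasure μ f g → g ∈ C


/-! ### Auxiliary lemmas -/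

lemma iSup_min_nat (a : ℝ≥0∞) : ⨆ n : ℕ, min a (n : ℝ≥0∞) = a := by
  apply le_antisymm (iSup_le fun n => min_le_left _ _)
  rcases eq_or_ne a ∞ with rfl | ha
  · simp [ENNReal.iSup_natCast]
  · lift a to NNReal using ha
    obtain ⟨n, hn⟩ := exists_nat_ge a
    refine le_iSup_of_le n (le_min le_rfl ?_)
    exact_mod_cast (by exact_mod_cast hn : (a : ℝ≥0∞) ≤ (n : ℝ≥0∞))

lemma mul_liminf_le' (a : ℝ≥0∞) (v : ℕ → ℝ≥0∞) :
    a * Filter.liminf v atTop ≤ Filter.liminf (fun n => a * v n) atTop := by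
  rw [Filter.liminf_eq_iSup_iInf_of_nat, Filter.liminf_eq_iSup_iInf_of_nat, ENNReal.mul_iSup]
  exact iSup_mono fun n => le_iInf₂ fun i hi => mul_le_mul_right (iInf₂_le i hi) a

lemma le_liminf_of_tendsto_sub {g : ℝ≥0∞} {u : ℕ → ℝ≥0∞}
    (h : Tendsto (fun n => g - u n) atTop (𝓝 0)) : g ≤ Filter.liminf u atTop := by
  by_contra hcon
  push_neg at hcon
  obtain ⟨c, hc1, hc2⟩ := exists_between hcon
  have hpos : 0 < g - c := by rwa [tsub_pos_iff_lt]
  have hev : ∀ᶠ n in atTop, g - u n < g - c := h.eventually (Iio_mem_nhds hpos)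
  have : c ≤ Filter.liminf u atTop := by
    refine le_liminf_of_le (by isBoundedDefault) (hev.mono fun n hn => ?_)
    by_contra hun
    push_neg at hun
    exact absurd (tsub_le_tsub_left hun.le g) (not_le.mpr hn)
  exact absurd this (not_le.mpr hc1)

lemma tendInMeasure_ae_liminf {μ : Measure Ω} [IsFiniteMeasure μ] {f : ℕ → Ω → ℝ≥0∞}
    {g : Ω → ℝ≥0∞} (h : TendInMeasure μ f g) :
    ∃ N : ℕ → ℕ, ∀ᵐ ω ∂μ, g ω ≤ Filter.liminf (fun k => f (N k) ω) atTop := by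
  have h2 : (0:ℝ≥0∞) < 2⁻¹ := by simp
  have hpow : ∀ k : ℕ, (0:ℝ≥0∞) < 2⁻¹ ^ k := fun k => ENNReal.pow_pos h2 k
  have hch : ∀ k : ℕ, ∃ n : ℕ,
      μ {ω | 2⁻¹ ^ k ≤ (f n ω - g ω) + (g ω - f n ω)} ≤ 2⁻¹ ^ k := by
    intro k
    exact ((h (2⁻¹ ^ k) (hpow k)).eventually (Iio_mem_nhds (hpow k))).exists.imp
      fun n hn => hn.le
  choose N hN using hch
  set s : ℕ → Set Ω := fun k => {ω | 2⁻¹ ^ k ≤ (f (N k) ω - g ω) + (g ω - f (N k) ω)} with hs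
  have hsum : (∑' k, μ (s k)) ≠ ∞ := by
    refine ne_top_of_le_ne_top ?_ (ENNReal.tsum_le_tsum hN)
    rw [ENNReal.tsum_geometric]
    simp
  refine ⟨N, (ae_eventually_notMem hsum).mono fun ω hω => ?_⟩
  refine le_liminf_of_tendsto_sub ?_
  have hd : Tendsto (fun k => (f (N k) ω - g ω) + (g ω - f (N k) ω)) atTop (𝓝 0) := by
    refine tendsto_of_tendsto_of_tendsto_of_le_of_le' tendsto_const_nhds
      (ENNReal.tendsto_pow_atTop_nhds_zero_of_lt_one (ENNReal.inv_lt_one.mpr one_lt_two)) ?_ ?_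
    · exact Eventually.of_forall fun k => zero_le
    · exact hω.mono fun k hk => (not_le.mp hk).le
  refine tendsto_of_tendsto_of_tendsto_of_le_of_le tendsto_const_nhds hd
    (fun k => zero_le) (fun k => le_add_self)

lemma ofReal_sub_le (p q : ℝ) : ENNReal.ofReal p - ENNReal.ofReal q ≤ ENNReal.ofReal (p - q) := by
  rw [tsub_le_iff_right]
  calc ENNReal.ofReal p = ENNReal.ofReal ((p - q) + q) := by ring_nf
    _ ≤ ENNReal.ofReal (p - q) + ENNReal.ofReal q := ENNReal.ofReal_add_le

lemma dist_ofReal_le (p q : ℝ) :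
    (ENNReal.ofReal p - ENNReal.ofReal q) + (ENNReal.ofReal q - ENNReal.ofReal p)
      ≤ 2 * ENNReal.ofReal |p - q| := by
  have h1 := (ofReal_sub_le p q).trans (ENNReal.ofReal_le_ofReal (le_abs_self _))
  have h2 := (ofReal_sub_le q p).trans (ENNReal.ofReal_le_ofReal (le_abs_self _))
  rw [abs_sub_comm q p] at h2
  calc _ ≤ ENNReal.ofReal |p - q| + ENNReal.ofReal |p - q| := add_le_add h1 h2
    _ = 2 * ENNReal.ofReal |p - q| := (two_mul _).symm

lemma lintegral_ofReal_abs_sq {μ : Measure Ω} [IsProbabilityMeasure μ] (z : Lp ℝ 2 μ) :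
    ∫⁻ ω, ENNReal.ofReal |z ω| ^ 2 ∂μ = ENNReal.ofReal ‖z‖ ^ 2 := by
  have h2 : ((2:ℝ≥0∞)).toReal = (2:ℝ) := by simp
  have hsn := eLpNorm_eq_lintegral_rpow_enorm_toReal (f := (z : Ω → ℝ)) (μ := μ)
    two_ne_zero ENNReal.ofNat_ne_top
  rw [h2] at hsn
  have hI : ∫⁻ ω, ENNReal.ofReal |z ω| ^ 2 ∂μ = ∫⁻ ω, ‖z ω‖ₑ ^ (2:ℝ) ∂μ := by
    refine lintegral_congr fun ω => ?_
    rw [Real.enorm_eq_ofReal_abs, ← ENNReal.rpow_natCast]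
    norm_num
  rw [hI]
  have hnorm : ENNReal.ofReal ‖z‖ = eLpNorm (z : Ω → ℝ) 2 μ := by
    rw [Lp.norm_def, ENNReal.ofReal_toReal (Lp.eLpNorm_ne_top z)]
  rw [hnorm, hsn, ← ENNReal.rpow_natCast, ← ENNReal.rpow_mul]
  norm_num

lemma tendInMeasure_of_L2 {μ : Measure Ω} [IsProbabilityMeasure μ]
    {x : ℕ → Lp ℝ 2 μ} {x₀ : Lp ℝ 2 μ} (hlim : Tendsto x atTop (𝓝 x₀)) :
    TendInMeasure μ (fun n ω => ENNReal.ofReal (x n ω)) (fun ω => ENNReal.ofReal (x₀ ω)) := by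
  intro ε hε
  set e : ℝ≥0∞ := min ε 1 / 2 with he
  have he0 : 0 < e := ENNReal.div_pos (lt_min hε zero_lt_one).ne' ENNReal.ofNat_ne_top
  have hene : e ≠ 0 := he0.ne'
  have hetop : e ≠ ∞ := ne_top_of_le_ne_top (by norm_num : (1/2 : ℝ≥0∞) ≠ ∞)
    (ENNReal.div_le_div_right (min_le_right _ _) 2)
  have hkey : ∀ n, μ {ω | ε ≤ (ENNReal.ofReal (x n ω) - ENNReal.ofReal (x₀ ω))
        + (ENNReal.ofReal (x₀ ω) - ENNReal.ofReal (x n ω))}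
      ≤ (e ^ 2)⁻¹ * (ENNReal.ofReal ‖x n - x₀‖ ^ 2) := by
    intro n
    have hsub : μ {ω | ε ≤ (ENNReal.ofReal (x n ω) - ENNReal.ofReal (x₀ ω))
          + (ENNReal.ofReal (x₀ ω) - ENNReal.ofReal (x n ω))}
        ≤ μ {ω | e ^ 2 ≤ ENNReal.ofReal |(x n - x₀ : Lp ℝ 2 μ) ω| ^ 2} := by
      refine measure_mono_ae ((Lp.coeFn_sub (x n) x₀).mono fun ω hω hmem => ?_)
      have h1 : min ε 1 ≤ 2 * ENNReal.ofReal |x n ω - x₀ ω| :=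
        le_trans (le_trans (min_le_left _ _) hmem) (dist_ofReal_le _ _)
      have h2 : e ≤ ENNReal.ofReal |x n ω - x₀ ω| := by
        rw [he, ENNReal.div_le_iff_le_mul (Or.inl two_ne_zero) (Or.inl ENNReal.ofNat_ne_top)]
        rwa [mul_comm] at h1
      have h3 : e ^ 2 ≤ ENNReal.ofReal |x n ω - x₀ ω| ^ 2 := pow_le_pow_left' h2 2
      have hω' : (x n - x₀ : Lp ℝ 2 μ) ω = x n ω - x₀ ω := hω
      show e ^ 2 ≤ ENNReal.ofReal |(x n - x₀ : Lp ℝ 2 μ) ω| ^ 2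
      rw [hω']
      exact h3
    have hmeas : AEMeasurable (fun ω => ENNReal.ofReal |(x n - x₀ : Lp ℝ 2 μ) ω| ^ 2) μ :=
      ((ENNReal.measurable_ofReal.comp
        ((Lp.stronglyMeasurable (x n - x₀)).measurable.abs)).pow_const 2).aemeasurable
    have hcheb := mul_meas_ge_le_lintegral₀ hmeas (e ^ 2)
    rw [lintegral_ofReal_abs_sq (x n - x₀)] at hcheb
    refine hsub.trans ?_
    calc μ {ω | e ^ 2 ≤ ENNReal.ofReal |(x n - x₀ : Lp ℝ 2 μ) ω| ^ 2}
        = (e ^ 2)⁻¹ * (e ^ 2 * μ {ω | e ^ 2 ≤ ENNReal.ofReal |(x n - x₀ : Lp ℝ 2 μ) ω| ^ 2}) := by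
          rw [← mul_assoc, ENNReal.inv_mul_cancel (pow_ne_zero 2 hene)
            (ENNReal.pow_ne_top hetop), one_mul]
      _ ≤ (e ^ 2)⁻¹ * (ENNReal.ofReal ‖x n - x₀‖ ^ 2) := mul_le_mul_right hcheb _
  have hnorm : Tendsto (fun n => ‖x n - x₀‖) atTop (𝓝 0) :=
    tendsto_iff_norm_sub_tendsto_zero.mp hlim
  have hofReal : Tendsto (fun n => ENNReal.ofReal ‖x n - x₀‖) atTop (𝓝 0) := by
    have := (ENNReal.continuous_ofReal.tendsto 0).comp hnorm
    simpa [Function.comp_def] using this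
  have hsq : Tendsto (fun n => (e ^ 2)⁻¹ * (ENNReal.ofReal ‖x n - x₀‖ ^ 2)) atTop (𝓝 0) := by
    have h1 : Tendsto (fun n => ENNReal.ofReal ‖x n - x₀‖ ^ 2) atTop (𝓝 0) := by
      have := ((ENNReal.continuous_pow 2).tendsto 0).comp hofReal
      simpa [Function.comp_def] using this
    have := ENNReal.Tendsto.const_mul h1 (Or.inr (ENNReal.inv_ne_top.mpr (pow_ne_zero 2 hene)))
    simpa using this
  exact tendsto_of_tendsto_of_tendsto_of_le_of_le tendsto_const_nhds hsq
    (fun n => zero_le) hkey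

section main
variable (Pfam : Set (Measure Ω)) (hne : Pfam.Nonempty)
    (hprob : ∀ P ∈ Pfam, IsProbabilityMeasure P)
    (μ : Measure Ω) [IsProbabilityMeasure μ]
    (hac : ∀ P ∈ Pfam, P ≪ μ)

include hprob in
lemma one_evar : IsEVar Pfam 1 :=
  ⟨measurable_const, fun P hP => by
    have := hprob P hP
    simp only [Pi.one_apply, lintegral_one]
    exact le_of_eq (measure_univ)⟩

lemma densSet_bound {h : Ω → ℝ≥0∞} (hh : h ∈ densSet Pfam μ) {X : Ω → ℝ≥0∞}
    (hX : IsEVar Pfam X) : ∫⁻ ω, h ω * X ω ∂μ ≤ 1 := by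
  have := hh.2.2 X hX
  rwa [lintegral_withDensity_eq_lintegral_mul μ hh.1 hX.1] at this

include hprob in
lemma densSet_of_bound {h : Ω → ℝ≥0∞} (hm : Measurable h)
    (hb : ∀ X, IsEVar Pfam X → ∫⁻ ω, h ω * X ω ∂μ ≤ 1) : h ∈ densSet Pfam μ := by
  have h1 : ∫⁻ ω, h ω ∂μ ≤ 1 := by simpa using hb 1 (one_evar Pfam hprob)
  have hfin : IsFiniteMeasure (μ.withDensity h) :=
    isFiniteMeasure_withDensity (ne_top_of_le_ne_top one_ne_top h1)
  refine ⟨hm, hfin, fun X hX => ?_⟩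
  rw [lintegral_withDensity_eq_lintegral_mul μ hm hX.1]
  exact hb X hX

include hac in
lemma part1 : ∀ P ∈ Peff Pfam, P ≪ μ := by
  intro P hP
  refine Measure.AbsolutelyContinuous.mk fun A hA hA0 => ?_
  have hX : IsEVar Pfam (A.indicator fun _ => (∞ : ℝ≥0∞)) := by
    refine ⟨measurable_const.indicator hA, fun Q hQ => ?_⟩
    rw [lintegral_indicator hA _, setLIntegral_const, hac Q hQ hA0]
    simp
  have h2 := hP.2 _ hX
  rw [lintegral_indicator hA _, setLIntegral_const] at h2
  by_contra hP0
  rw [ENNReal.top_mul hP0] at h2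
  exact absurd h2 (by simp)

include hprob hac in
lemma part2 : ∀ P ∈ Pfam, P.rnDeriv μ ∈ densSet Pfam μ := by
  intro P hP
  haveI := hprob P hP
  refine ⟨P.measurable_rnDeriv μ, ?_⟩
  rw [Measure.withDensity_rnDeriv_eq P μ (hac P hP)]
  exact ⟨inferInstance, fun X hX => hX.2 P hP⟩

include hprob in
lemma part3 : ConvexD (densSet Pfam μ) := by
  intro f hf g hg t ht
  refine densSet_of_bound Pfam hprob μ
    ((measurable_const.mul hf.1).add (measurable_const.mul hg.1)) fun X hX => ?_
  have h1 : ∫⁻ ω, (t * f ω + (1 - t) * g ω) * X ω ∂μ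
      = t * ∫⁻ ω, f ω * X ω ∂μ + (1 - t) * ∫⁻ ω, g ω * X ω ∂μ := by
    simp only [add_mul, mul_assoc]
    rw [lintegral_add_left (f := fun ω => t * (f ω * X ω)) (measurable_const.mul (hf.1.mul hX.1)),
      lintegral_const_mul t (f := fun ω => f ω * X ω) (hf.1.mul hX.1),
      lintegral_const_mul _ (f := fun ω => g ω * X ω) (hg.1.mul hX.1)]
  rw [h1]
  calc t * ∫⁻ ω, f ω * X ω ∂μ + (1 - t) * ∫⁻ ω, g ω * X ω ∂μ
      ≤ t * 1 + (1 - t) * 1 :=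
        add_le_add (mul_le_mul_right (densSet_bound Pfam μ hf hX) t)
          (mul_le_mul_right (densSet_bound Pfam μ hg hX) (1 - t))
    _ = 1 := by rw [mul_one, mul_one, add_tsub_cancel_of_le ht]

include hprob in
lemma part4 : SolidD μ (densSet Pfam μ) := by
  intro f hf g hgm hle
  refine densSet_of_bound Pfam hprob μ hgm fun X hX => ?_
  refine le_trans (lintegral_mono_ae (hle.mono fun ω hω => mul_le_mul_left hω (X ω)))
    (densSet_bound Pfam μ hf hX)

include hprob in
lemma part5 : ClosedD μ (densSet Pfam μ) := by
  intro f hfC g hgm htm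
  obtain ⟨N, hae⟩ := tendInMeasure_ae_liminf htm
  refine densSet_of_bound Pfam hprob μ hgm fun X hX => ?_
  have step : ∀ᵐ ω ∂μ, g ω * X ω ≤ Filter.liminf (fun k => f (N k) ω * X ω) atTop := by
    refine hae.mono fun ω hω => ?_
    calc g ω * X ω = X ω * g ω := mul_comm _ _
      _ ≤ X ω * Filter.liminf (fun k => f (N k) ω) atTop := mul_le_mul_right hω _
      _ ≤ Filter.liminf (fun k => X ω * f (N k) ω) atTop := mul_liminf_le' _ _
      _ = Filter.liminf (fun k => f (N k) ω * X ω) atTop := by simp only [mul_comm]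
  calc ∫⁻ ω, g ω * X ω ∂μ
      ≤ ∫⁻ ω, Filter.liminf (fun k => f (N k) ω * X ω) atTop ∂μ := lintegral_mono_ae step
    _ ≤ Filter.liminf (fun k => ∫⁻ ω, f (N k) ω * X ω ∂μ) atTop :=
        lintegral_liminf_le fun k => (hfC (N k)).1.mul hX.1
    _ ≤ 1 := liminf_le_of_frequently_le
        (Frequently.of_forall fun k => densSet_bound Pfam μ (hfC (N k)) hX)


include hne hprob hac in
lemma exists_evar_of_not_mem
    (C : Set (Ω → ℝ≥0∞)) (hCmeas : ∀ f ∈ C, Measurable f)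
    (hCrn : ∀ P ∈ Pfam, P.rnDeriv μ ∈ C)
    (hconv : ConvexD C) (hsolid : SolidD μ C) (hclosed : ClosedD μ C)
    {fM : Ω → ℝ≥0∞} (hfMmeas : Measurable fM) (M : ℕ) (hfMle : ∀ ω, fM ω ≤ (M : ℝ≥0∞))
    (hfM : fM ∉ C) :
    ∃ X, IsEVar Pfam X ∧ 1 < ∫⁻ ω, fM ω * X ω ∂μ := by
  haveI : Fact ((1:ℝ≥0∞) ≤ 2) := ⟨one_le_two⟩
  have hfMne : ∀ ω, fM ω ≠ ∞ := fun ω =>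
    ne_top_of_le_ne_top (ENNReal.natCast_ne_top M) (hfMle ω)
  have h0C : (fun _ : Ω => (0:ℝ≥0∞)) ∈ C := by
    obtain ⟨P₀, hP₀⟩ := hne
    exact hsolid _ (hCrn P₀ hP₀) _ measurable_const
      (Eventually.of_forall fun _ => zero_le)
  set S : Set (Lp ℝ 2 μ) := {x | (fun ω => ENNReal.ofReal (x ω)) ∈ C} with hS
  -- bounded nonneg functions give Lp members
  have hmem2 : ∀ (g : Ω → ℝ≥0∞) (K : ℕ), Measurable g → (∀ ω, g ω ≤ (K : ℝ≥0∞)) →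
      MemLp (fun ω => (g ω).toReal) 2 μ := by
    intro g K hg hgK
    refine MemLp.of_bound hg.ennreal_toReal.aestronglyMeasurable (K : ℝ)
      (Eventually.of_forall fun ω => ?_)
    rw [Real.norm_eq_abs, abs_of_nonneg ENNReal.toReal_nonneg]
    calc (g ω).toReal ≤ ((K : ℝ≥0∞)).toReal :=
        ENNReal.toReal_mono (ENNReal.natCast_ne_top K) (hgK ω)
      _ = (K : ℝ) := by simp
  -- convexity of S
  have hSconv : Convex ℝ S := by
    intro x hx y hy a b ha hb hab
    show (fun ω => ENNReal.ofReal ((a • x + b • y : Lp ℝ 2 μ) ω)) ∈ C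
    have ha1 : a ≤ 1 := by linarith
    have hT : (fun ω => ENNReal.ofReal a * ENNReal.ofReal (x ω)
        + (1 - ENNReal.ofReal a) * ENNReal.ofReal (y ω)) ∈ C :=
      hconv _ hx _ hy (ENNReal.ofReal a) (ENNReal.ofReal_le_one.mpr ha1)
    have hb' : (1 : ℝ≥0∞) - ENNReal.ofReal a = ENNReal.ofReal b := by
      rw [← ENNReal.ofReal_one, ← ENNReal.ofReal_sub _ ha]
      congr 1; linarith
    refine hsolid _ hT _
      (ENNReal.measurable_ofReal.comp (Lp.stronglyMeasurable _).measurable) ?_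
    filter_upwards [Lp.coeFn_add (a • x) (b • y), Lp.coeFn_smul a x, Lp.coeFn_smul b y]
      with ω h1 h2 h3
    have hz : (a • x + b • y : Lp ℝ 2 μ) ω = a * x ω + b * y ω := by
      rw [h1, Pi.add_apply, h2, h3, Pi.smul_apply, Pi.smul_apply, smul_eq_mul, smul_eq_mul]
    rw [hz, hb']
    calc ENNReal.ofReal (a * x ω + b * y ω)
        ≤ ENNReal.ofReal (a * x ω) + ENNReal.ofReal (b * y ω) := ENNReal.ofReal_add_le
      _ = ENNReal.ofReal a * ENNReal.ofReal (x ω) + ENNReal.ofReal b * ENNReal.ofReal (y ω) := by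
          rw [ENNReal.ofReal_mul ha, ENNReal.ofReal_mul hb]
  -- closedness of S
  have hSclosed : IsClosed S := by
    refine IsSeqClosed.isClosed fun x x₀ hx hlim => ?_
    exact hclosed (fun n ω => ENNReal.ofReal (x n ω)) hx _
      (ENNReal.measurable_ofReal.comp (Lp.stronglyMeasurable x₀).measurable)
      (tendInMeasure_of_L2 hlim)
  -- the point to separate
  set xf : Lp ℝ 2 μ := (hmem2 fM M hfMmeas hfMle).toLp _ with hxfdef
  have hxf : xf ∉ S := by
    intro hmem
    apply hfM
    refine hsolid _ hmem fM hfMmeas ?_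
    refine (MemLp.coeFn_toLp (hmem2 fM M hfMmeas hfMle)).mono fun ω hω => ?_
    show fM ω ≤ ENNReal.ofReal (xf ω)
    rw [hω, ENNReal.ofReal_toReal (hfMne ω)]
  obtain ⟨φ, u, hSu, hxu⟩ := geometric_hahn_banach_closed_point hSconv hSclosed hxf
  have h0S : (0 : Lp ℝ 2 μ) ∈ S := by
    refine hsolid _ h0C _
      (ENNReal.measurable_ofReal.comp (Lp.stronglyMeasurable _).measurable) ?_
    filter_upwards [Lp.coeFn_zero (E := ℝ) (p := 2) (μ := μ)] with ω hω
    simp [hω]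
  have hu0 : 0 < u := by
    have := hSu 0 h0S
    rwa [map_zero] at this
  have hu0' : ENNReal.ofReal u ≠ 0 := (ENNReal.ofReal_pos.mpr hu0).ne'
  -- Riesz representation
  set Y : Lp ℝ 2 μ := (InnerProductSpace.toDual ℝ (Lp ℝ 2 μ)).symm φ with hYdef
  have hy : Measurable (Y : Ω → ℝ) := (Lp.stronglyMeasurable Y).measurable
  have hYapp : ∀ z : Lp ℝ 2 μ, ∫ ω, Y ω * z ω ∂μ = φ z := by
    intro z
    have h1 : inner (𝕜 := ℝ) Y z = φ z := InnerProductSpace.toDual_symm_apply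
    rw [← h1, L2.inner_def]
    simp_rw [RCLike.inner_apply, starRingEnd_apply, star_trivial]
    exact integral_congr_ae (Eventually.of_forall fun ω => mul_comm _ _)
  have hYint : Integrable (Y : Ω → ℝ) μ :=
    memLp_one_iff_integrable.mp ((Lp.memLp Y).mono_exponent (by norm_num))
  have hYp : Measurable fun ω => ENNReal.ofReal (Y ω) := ENNReal.measurable_ofReal.comp hy
  -- Claim A
  have hA : ∀ g ∈ C, ∫⁻ ω, ENNReal.ofReal (Y ω) * g ω ∂μ ≤ ENNReal.ofReal u := by
    intro g hg
    have hgm := hCmeas g hg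
    have hbdd : ∀ K : ℕ, ∫⁻ ω, ENNReal.ofReal (Y ω) * min (g ω) K ∂μ ≤ ENNReal.ofReal u := by
      intro K
      set g' : Ω → ℝ≥0∞ := fun ω => if 0 < Y ω then min (g ω) K else 0 with hg'def
      have hg'm : Measurable g' :=
        Measurable.ite (measurableSet_lt measurable_const hy)
          (hgm.min measurable_const) measurable_const
      have hg'C : g' ∈ C := by
        refine hsolid g hg g' hg'm (Eventually.of_forall fun ω => ?_)
        by_cases h : 0 < Y ω <;> simp [hg'def, h, min_le_left]
      have hg'K : ∀ ω, g' ω ≤ (K : ℝ≥0∞) := fun ω => by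
        by_cases h : 0 < Y ω <;> simp [hg'def, h, min_le_right]
      have hg'ne : ∀ ω, g' ω ≠ ∞ := fun ω =>
        ne_top_of_le_ne_top (ENNReal.natCast_ne_top K) (hg'K ω)
      have hmem := hmem2 g' K hg'm hg'K
      set xg : Lp ℝ 2 μ := hmem.toLp _ with hxgdef
      have hxgS : xg ∈ S := by
        refine hsolid g' hg'C _
          (ENNReal.measurable_ofReal.comp (Lp.stronglyMeasurable _).measurable) ?_
        refine (MemLp.coeFn_toLp hmem).mono fun ω hω => ?_
        show ENNReal.ofReal (xg ω) ≤ g' ω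
        rw [hω, ENNReal.ofReal_toReal (hg'ne ω)]
      have hlt : φ xg < u := hSu xg hxgS
      -- pointwise identity
      have hpt : ∀ ω, ENNReal.ofReal (Y ω) * min (g ω) K
          = ENNReal.ofReal (Y ω * (g' ω).toReal) := by
        intro ω
        by_cases h : 0 < Y ω
        · rw [hg'def]
          simp only [h, if_true]
          rw [ENNReal.ofReal_mul h.le, ENNReal.ofReal_toReal
            (ne_top_of_le_ne_top (ENNReal.natCast_ne_top K) (min_le_right _ _))]
        · push_neg at h
          rw [hg'def]
          simp only [if_neg (not_lt.mpr h)]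
          rw [ENNReal.toReal_zero, mul_zero, ENNReal.ofReal_zero,
            ENNReal.ofReal_of_nonpos h, zero_mul]
      have hnn : ∀ ω, 0 ≤ Y ω * (g' ω).toReal := by
        intro ω
        by_cases h : 0 < Y ω
        · exact mul_nonneg h.le ENNReal.toReal_nonneg
        · push_neg at h
          rw [hg'def]; simp [not_lt.mpr h]
      have hintg : Integrable (fun ω => Y ω * (g' ω).toReal) μ := by
        refine Integrable.mono' (hYint.abs.mul_const (K : ℝ))
          (hy.mul hg'm.ennreal_toReal).aestronglyMeasurable
          (Eventually.of_forall fun ω => ?_)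
        rw [Real.norm_eq_abs, abs_mul, abs_of_nonneg (ENNReal.toReal_nonneg)]
        refine mul_le_mul_of_nonneg_left ?_ (abs_nonneg _)
        calc (g' ω).toReal ≤ ((K : ℝ≥0∞)).toReal :=
            ENNReal.toReal_mono (ENNReal.natCast_ne_top K) (hg'K ω)
          _ = (K : ℝ) := by simp
      calc ∫⁻ ω, ENNReal.ofReal (Y ω) * min (g ω) K ∂μ
          = ∫⁻ ω, ENNReal.ofReal (Y ω * (g' ω).toReal) ∂μ := lintegral_congr hpt
        _ = ENNReal.ofReal (∫ ω, Y ω * (g' ω).toReal ∂μ) :=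
            (ofReal_integral_eq_lintegral_ofReal hintg
              (Eventually.of_forall hnn)).symm
        _ ≤ ENNReal.ofReal u := by
            refine ENNReal.ofReal_le_ofReal (le_of_lt ?_)
            calc ∫ ω, Y ω * (g' ω).toReal ∂μ
                = ∫ ω, Y ω * xg ω ∂μ := by
                  refine integral_congr_ae ?_
                  filter_upwards [MemLp.coeFn_toLp hmem] with ω hω
                  rw [hω]
              _ = φ xg := hYapp xg
              _ < u := hlt
    have hiSup : ∫⁻ ω, ENNReal.ofReal (Y ω) * g ω ∂μ
        = ⨆ K : ℕ, ∫⁻ ω, ENNReal.ofReal (Y ω) * min (g ω) K ∂μ := by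
      rw [← lintegral_iSup (f := fun (K : ℕ) ω => ENNReal.ofReal (Y ω) * min (g ω) K)
        (fun K => hYp.mul (hgm.min measurable_const))
        (fun i j hij => fun ω => mul_le_mul_right
          (min_le_min le_rfl (by exact_mod_cast Nat.cast_le.mpr hij)) _)]
      refine lintegral_congr fun ω => ?_
      rw [← ENNReal.mul_iSup, iSup_min_nat]
    rw [hiSup]
    exact iSup_le hbdd
  -- Claim B
  have hB : ENNReal.ofReal u < ∫⁻ ω, ENNReal.ofReal (Y ω) * fM ω ∂μ := by
    have hpt : ∀ ω, ENNReal.ofReal (Y ω) * fM ω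
        = ENNReal.ofReal (max (Y ω) 0 * (fM ω).toReal) := by
      intro ω
      rw [ENNReal.ofReal_mul (le_max_right _ _), ENNReal.ofReal_toReal (hfMne ω)]
      congr 1
      rcases le_total 0 (Y ω) with h | h
      · rw [max_eq_left h]
      · rw [max_eq_right h, ENNReal.ofReal_of_nonpos h, ENNReal.ofReal_zero]
    have hint1 : Integrable (fun ω => max (Y ω) 0 * (fM ω).toReal) μ := by
      refine Integrable.mono' (hYint.abs.mul_const (M : ℝ))
        ((hy.max measurable_const).mul hfMmeas.ennreal_toReal).aestronglyMeasurable
        (Eventually.of_forall fun ω => ?_)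
      rw [Real.norm_eq_abs, abs_mul, abs_of_nonneg (ENNReal.toReal_nonneg)]
      refine mul_le_mul ?_ ?_ ENNReal.toReal_nonneg (abs_nonneg _)
      · rw [abs_of_nonneg (le_max_right _ _)]
        rcases le_total 0 (Y ω) with h | h
        · rw [max_eq_left h]; exact le_abs_self _
        · rw [max_eq_right h]; exact abs_nonneg _
      · calc (fM ω).toReal ≤ ((M : ℝ≥0∞)).toReal :=
            ENNReal.toReal_mono (ENNReal.natCast_ne_top M) (hfMle ω)
          _ = (M : ℝ) := by simp
    have hint2 : Integrable (fun ω => Y ω * (fM ω).toReal) μ := by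
      refine Integrable.mono' (hYint.abs.mul_const (M : ℝ))
        (hy.mul hfMmeas.ennreal_toReal).aestronglyMeasurable
        (Eventually.of_forall fun ω => ?_)
      rw [Real.norm_eq_abs, abs_mul]
      refine mul_le_mul_of_nonneg_left ?_ (abs_nonneg _)
      rw [abs_of_nonneg (ENNReal.toReal_nonneg)]
      calc (fM ω).toReal ≤ ((M : ℝ≥0∞)).toReal :=
          ENNReal.toReal_mono (ENNReal.natCast_ne_top M) (hfMle ω)
        _ = (M : ℝ) := by simp
    have hge : u < ∫ ω, max (Y ω) 0 * (fM ω).toReal ∂μ := by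
      calc u < φ xf := hxu
        _ = ∫ ω, Y ω * xf ω ∂μ := (hYapp xf).symm
        _ = ∫ ω, Y ω * (fM ω).toReal ∂μ := by
            refine integral_congr_ae ?_
            filter_upwards [MemLp.coeFn_toLp (hmem2 fM M hfMmeas hfMle)] with ω hω
            rw [hω]
        _ ≤ ∫ ω, max (Y ω) 0 * (fM ω).toReal ∂μ := by
            refine integral_mono hint2 hint1 fun ω => ?_
            exact mul_le_mul_of_nonneg_right (le_max_left _ _) ENNReal.toReal_nonneg
    calc ENNReal.ofReal u < ENNReal.ofReal (∫ ω, max (Y ω) 0 * (fM ω).toReal ∂μ) :=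
        (ENNReal.ofReal_lt_ofReal_iff (lt_trans hu0 hge)).mpr hge
      _ = ∫⁻ ω, ENNReal.ofReal (max (Y ω) 0 * (fM ω).toReal) ∂μ :=
          ofReal_integral_eq_lintegral_ofReal hint1
            (Eventually.of_forall fun ω =>
              mul_nonneg (le_max_right _ _) ENNReal.toReal_nonneg)
      _ = ∫⁻ ω, ENNReal.ofReal (Y ω) * fM ω ∂μ := (lintegral_congr hpt).symm
  -- build the e-variable
  refine ⟨fun ω => (ENNReal.ofReal u)⁻¹ * ENNReal.ofReal (Y ω),
    ⟨measurable_const.mul hYp, ?_⟩, ?_⟩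
  · intro P hP
    haveI := hprob P hP
    rw [← lintegral_rnDeriv_mul (hac P hP) (f := fun ω => (ENNReal.ofReal u)⁻¹ * ENNReal.ofReal (Y ω))
      (measurable_const.mul hYp).aemeasurable]
    have hcomm : ∀ ω, P.rnDeriv μ ω * ((ENNReal.ofReal u)⁻¹ * ENNReal.ofReal (Y ω))
        = (ENNReal.ofReal u)⁻¹ * (ENNReal.ofReal (Y ω) * P.rnDeriv μ ω) := fun ω => by ring
    rw [lintegral_congr hcomm,
      lintegral_const_mul _ (f := fun ω => ENNReal.ofReal (Y ω) * P.rnDeriv μ ω)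
        (hYp.mul (P.measurable_rnDeriv μ))]
    calc (ENNReal.ofReal u)⁻¹ * ∫⁻ ω, ENNReal.ofReal (Y ω) * P.rnDeriv μ ω ∂μ
        ≤ (ENNReal.ofReal u)⁻¹ * ENNReal.ofReal u :=
          mul_le_mul_right (hA _ (hCrn P hP)) _
      _ = 1 := ENNReal.inv_mul_cancel hu0' ENNReal.ofReal_ne_top
  · have hcomm : ∀ ω, fM ω * ((ENNReal.ofReal u)⁻¹ * ENNReal.ofReal (Y ω))
        = (ENNReal.ofReal u)⁻¹ * (ENNReal.ofReal (Y ω) * fM ω) := fun ω => by ring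
    rw [lintegral_congr hcomm, lintegral_const_mul _ (f := fun ω => ENNReal.ofReal (Y ω) * fM ω)
      (hYp.mul hfMmeas)]
    have h1 : (1:ℝ≥0∞) = (ENNReal.ofReal u)⁻¹ * ENNReal.ofReal u :=
      (ENNReal.inv_mul_cancel hu0' ENNReal.ofReal_ne_top).symm
    rw [h1]
    refine ENNReal.mul_lt_mul_right ?_ ?_ hB
    · simpa using hu0'
    · simp [hu0']


include hne hprob hac in
lemma part6 (C : Set (Ω → ℝ≥0∞)) (hCmeas : ∀ f ∈ C, Measurable f)
    (hCrn : ∀ P ∈ Pfam, P.rnDeriv μ ∈ C)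
    (hconv : ConvexD C) (hsolid : SolidD μ C) (hclosed : ClosedD μ C) :
    densSet Pfam μ ⊆ C := by
  intro f hf
  have hfint : ∫⁻ ω, f ω ∂μ ≤ 1 := by
    simpa using densSet_bound Pfam μ hf (one_evar Pfam hprob)
  suffices hMC : ∀ M : ℕ, (fun ω => min (f ω) (M : ℝ≥0∞)) ∈ C by
    refine hclosed _ hMC f hf.1 ?_
    intro ε hε
    have hinfty : μ {ω | f ω = ∞} = 0 := by
      have h1 := ae_lt_top hf.1 (ne_top_of_le_ne_top ENNReal.one_ne_top hfint)
      rw [ae_iff] at h1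
      simpa [not_lt, top_le_iff] using h1
    have hseq : ∀ (M : ℕ) ω, ((min (f ω) (M:ℝ≥0∞) - f ω) + (f ω - min (f ω) (M:ℝ≥0∞)))
        = f ω - min (f ω) (M:ℝ≥0∞) :=
      fun M ω => by rw [tsub_eq_zero_of_le (min_le_left _ _), zero_add]
    have hmeas : ∀ M : ℕ, MeasurableSet
        {ω | ε ≤ (min (f ω) (M:ℝ≥0∞) - f ω) + (f ω - min (f ω) (M:ℝ≥0∞))} := by
      intro M
      apply measurableSet_le measurable_const
      exact ((hf.1.min measurable_const).sub hf.1).add (hf.1.sub (hf.1.min measurable_const))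
    have hanti : Antitone (fun M : ℕ =>
        {ω | ε ≤ (min (f ω) (M:ℝ≥0∞) - f ω) + (f ω - min (f ω) (M:ℝ≥0∞))}) := by
      intro i j hij ω hω
      simp only [Set.mem_setOf_eq, hseq] at hω ⊢
      exact le_trans hω (tsub_le_tsub_left
        (min_le_min le_rfl (by exact_mod_cast Nat.cast_le.mpr hij)) _)
    have hint : (⋂ M : ℕ, {ω | ε ≤ (min (f ω) (M:ℝ≥0∞) - f ω) + (f ω - min (f ω) (M:ℝ≥0∞))})
        ⊆ {ω | f ω = ∞} := by
      intro ω hω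
      simp only [Set.mem_iInter, Set.mem_setOf_eq, hseq] at hω
      by_contra hne'
      obtain ⟨n, hn⟩ := ENNReal.exists_nat_gt (hne' : f ω ≠ ∞)
      have h2 := hω n
      rw [min_eq_left hn.le, tsub_self] at h2
      exact absurd h2 (not_le.mpr hε)
    have h0 : μ (⋂ M : ℕ, {ω | ε ≤ (min (f ω) (M:ℝ≥0∞) - f ω) + (f ω - min (f ω) (M:ℝ≥0∞))})
        = 0 := measure_mono_null hint hinfty
    have htends := tendsto_measure_iInter_atTop
      (fun M => (hmeas M).nullMeasurableSet) hanti ⟨0, measure_ne_top μ _⟩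
    rw [h0] at htends
    exact htends
  intro M
  by_contra hfM
  have hfMdens : (fun ω => min (f ω) (M:ℝ≥0∞)) ∈ densSet Pfam μ :=
    part4 Pfam hprob μ f hf _ (hf.1.min measurable_const)
      (Eventually.of_forall fun ω => min_le_left _ _)
  obtain ⟨X, hX, hgt⟩ := exists_evar_of_not_mem Pfam hne hprob μ hac C hCmeas hCrn
    hconv hsolid hclosed (hf.1.min measurable_const) M (fun ω => min_le_right _ _) hfM
  exact absurd (densSet_bound Pfam μ hfMdens hX) (not_le.mpr hgt)

end main

/-- If all of `Pfam` is dominated by a probability measure `μ`, then so is the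
effective null, and (identified with its densities) the effective null is the
smallest convex, solid, `μ`-closed set of densities containing those of `Pfam`. -/
theorem peff_smallest_closed_convex_solid (Pfam : Set (Measure Ω)) (hne : Pfam.Nonempty)
    (hprob : ∀ P ∈ Pfam, IsProbabilityMeasure P)
    (μ : Measure Ω) [IsProbabilityMeasure μ]
    (hac : ∀ P ∈ Pfam, P ≪ μ) :
    (∀ P ∈ Peff Pfam, P ≪ μ) ∧
    (∀ P ∈ Pfam, P.rnDeriv μ ∈ densSet Pfam μ) ∧
    ConvexD (densSet Pfam μ) ∧
    SolidD μ (densSet Pfam μ) ∧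
    ClosedD μ (densSet Pfam μ) ∧
    (∀ C : Set (Ω → ℝ≥0∞), (∀ f ∈ C, Measurable f) →
      (∀ P ∈ Pfam, P.rnDeriv μ ∈ C) →
      ConvexD C → SolidD μ C → ClosedD μ C →
      densSet Pfam μ ⊆ C) := by
  exact ⟨part1 Pfam μ hac, part2 Pfam hprob μ hac, part3 Pfam hprob μ,
    part4 Pfam hprob μ, part5 Pfam hprob μ,
    fun C hCmeas hCrn hconv hsolid hclosed =>
      part6 Pfam hne hprob μ hac C hCmeas hCrn hconv hsolid hclosed⟩
end

section
/- If 𝒫 is a finite set of probability measures, then the effective null 𝒫_eff consists of exactly those nonnegative finite measures P such that P(A) ≤ P'(A) for all events A, for some P' in the convex hull of 𝒫. In particular, the set of probability measures in 𝒫_eff equals the convex hull of 𝒫. -/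
open MeasureTheory ENNReal Filter Set Topology

variable {Ω : Type*} [MeasurableSpace Ω]

/-- The set of finite convex combinations of elements of `Pfam`. -/
def convComb (Pfam : Set (Measure Ω)) : Set (Measure Ω) :=
  {P' | ∃ (n : ℕ) (w : Fin n → ℝ≥0∞) (Ps : Fin n → Measure Ω),
    (∀ i, Ps i ∈ Pfam) ∧ (∑ i, w i) = 1 ∧ P' = ∑ i, w i • Ps i}

lemma lintegral_convComb {Pfam : Set (Measure Ω)} {P' : Measure Ω}
    (h : P' ∈ convComb Pfam) (X : Ω → ℝ≥0∞) (hX : IsEVar Pfam X) :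
    ∫⁻ ω, X ω ∂P' ≤ 1 := by
  obtain ⟨n, w, Ps, hPs, hw, rfl⟩ := h
  rw [lintegral_finset_sum_measure]
  calc ∑ i ∈ Finset.univ, ∫⁻ ω, X ω ∂(w i • Ps i)
      ≤ ∑ i : Fin n, w i * 1 := by
        refine Finset.sum_le_sum fun i _ => ?_
        rw [lintegral_smul_measure]
        exact mul_le_mul_right (hX.2 _ (hPs i)) _
    _ = 1 := by simp [hw]

/-- easy direction -/

lemma mem_peff_of_dom {Pfam : Set (Measure Ω)} {P P' : Measure Ω}
    (hPf : IsFiniteMeasure P) (h' : P' ∈ convComb Pfam)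
    (hdom : ∀ A, MeasurableSet A → P A ≤ P' A) : P ∈ Peff Pfam := by
  refine ⟨hPf, fun X hX => ?_⟩
  refine le_trans (lintegral_mono' (Measure.le_iff.2 hdom) le_rfl) ?_
  exact lintegral_convComb h' X hX

/-- convComb of probability measures is a probability measure -/

lemma convComb_prob {Pfam : Set (Measure Ω)}
    (hprob : ∀ P ∈ Pfam, IsProbabilityMeasure P) {P' : Measure Ω}
    (h : P' ∈ convComb Pfam) : IsProbabilityMeasure P' := by
  obtain ⟨n, w, Ps, hPs, hw, rfl⟩ := h
  constructor
  rw [Measure.finset_sum_apply]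
  have : ∀ i : Fin n, (w i • Ps i) Set.univ = w i := by
    intro i
    have := (hprob _ (hPs i)).measure_univ
    simp [Measure.smul_apply, this]
  simp [this, hw]

lemma key_lemma {Pfam : Set (Measure Ω)} {P : Measure Ω}
    (hP : ∀ X, IsEVar Pfam X → ∫⁻ ω, X ω ∂P ≤ 1)
    {X : Ω → ℝ≥0∞} (hXm : Measurable X) {c : ℝ≥0∞}
    (hc : ∀ P' ∈ Pfam, ∫⁻ ω, X ω ∂P' ≤ c) : ∫⁻ ω, X ω ∂P ≤ c := by
  rcases eq_top_or_lt_top c with hct | hct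
  · simp [hct]
  rcases eq_or_ne c 0 with rfl | hc0
  · -- all integrals zero
    by_contra h
    push_neg at h
    set a := ∫⁻ ω, X ω ∂P with ha
    have ha0 : a ≠ 0 := by intro h0; rw [h0] at h; exact (not_lt_of_ge le_rfl) (lt_of_le_of_lt bot_le h)
    rcases eq_or_ne a ∞ with haT | haT
    · have : a ≤ 1 := hP X ⟨hXm, fun P' hP' => le_trans (hc P' hP') zero_le⟩
      rw [haT] at this; exact (by norm_num : ¬ (⊤ : ℝ≥0∞) ≤ 1) this
    · have hev : IsEVar Pfam (fun ω => (2 / a) * X ω) := by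
        refine ⟨(measurable_const.mul hXm), fun P' hP' => ?_⟩
        rw [lintegral_const_mul _ hXm]
        have := hc P' hP'
        have h0 : ∫⁻ ω, X ω ∂P' = 0 := le_antisymm (by simpa using this) zero_le
        simp [h0]
      have := hP _ hev
      rw [lintegral_const_mul _ hXm, ← ha, ENNReal.div_mul_cancel ha0 haT] at this
      norm_num at this
  · have hev : IsEVar Pfam (fun ω => c⁻¹ * X ω) := by
      refine ⟨measurable_const.mul hXm, fun P' hP' => ?_⟩
      rw [lintegral_const_mul _ hXm]
      calc c⁻¹ * ∫⁻ ω, X ω ∂P' ≤ c⁻¹ * c := mul_le_mul_right (hc P' hP') _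
        _ = 1 := ENNReal.inv_mul_cancel hc0 hct.ne
    have := hP _ hev
    rw [lintegral_const_mul _ hXm] at this
    calc ∫⁻ ω, X ω ∂P = c * (c⁻¹ * ∫⁻ ω, X ω ∂P) := by
          rw [← mul_assoc, ENNReal.mul_inv_cancel hc0 hct.ne, one_mul]
      _ ≤ c * 1 := mul_le_mul_right this _
      _ = c := mul_one c

lemma hard_dir {Pfam : Set (Measure Ω)} (hne : Pfam.Nonempty) (hfin : Pfam.Finite)
    (hprob : ∀ P ∈ Pfam, IsProbabilityMeasure P) {P : Measure Ω}
    (hPf : IsFiniteMeasure P)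
    (hP : ∀ X, IsEVar Pfam X → ∫⁻ ω, X ω ∂P ≤ 1) :
    ∃ P' ∈ convComb Pfam, ∀ A, MeasurableSet A → P A ≤ P' A := by
  rcases eq_or_ne (P Set.univ) 0 with hP0 | hP0
  · obtain ⟨Q, hQ⟩ := hne
    refine ⟨Q, ⟨1, (fun _ => 1), (fun _ => Q), fun _ => hQ, by simp, by simp⟩,
      fun A hA => ?_⟩
    calc P A ≤ P Set.univ := measure_mono (Set.subset_univ A)
      _ = 0 := hP0
      _ ≤ Q A := zero_le
  -- enumeration
  haveI : Fintype ↥Pfam := hfin.fintype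
  set n := Fintype.card ↥Pfam with hn
  set e : ↥Pfam ≃ Fin n := Fintype.equivFin ↥Pfam with he
  set Ps : Fin n → Measure Ω := fun i => ((e.symm i : ↥Pfam) : Measure Ω) with hPsdef
  have hPs : ∀ i, Ps i ∈ Pfam := fun i => (e.symm i).2
  have hsurj : ∀ Q ∈ Pfam, ∃ i, Ps i = Q := by
    intro Q hQ
    exact ⟨e ⟨Q, hQ⟩, by simp [hPsdef]⟩
  have key : ∀ (X : Ω → ℝ≥0∞), Measurable X → ∀ c : ℝ≥0∞,
      (∀ i, ∫⁻ ω, X ω ∂(Ps i) ≤ c) → ∫⁻ ω, X ω ∂P ≤ c := by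
    intro X hXm c hc
    refine key_lemma hP hXm fun Q hQ => ?_
    obtain ⟨i, rfl⟩ := hsurj Q hQ
    exact hc i
  -- the convex sets
  set K : Set (Fin n → ℝ) :=
    {v | ∃ X : Ω → ℝ≥0∞, Measurable X ∧ (∫⁻ ω, X ω ∂P) = 1 ∧
      (∀ i, ∫⁻ ω, X ω ∂(Ps i) ≠ ∞) ∧ ∀ i, v i = (∫⁻ ω, X ω ∂(Ps i)).toReal}
    with hKdef
  set U : Set (Fin n → ℝ) := {v | ∀ i, v i < 1} with hUdef
  have hUopen : IsOpen U := by
    have : U = Set.pi Set.univ (fun _ : Fin n => Set.Iio (1:ℝ)) := by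
      ext v; simp [hUdef, Set.mem_pi]
    rw [this]
    exact isOpen_set_pi Set.finite_univ (fun _ _ => isOpen_Iio)
  have hUconv : Convex ℝ U := by
    have : U = Set.pi Set.univ (fun _ : Fin n => Set.Iio (1:ℝ)) := by
      ext v; simp [hUdef, Set.mem_pi]
    rw [this]
    exact convex_pi (fun _ _ => convex_Iio 1)
  have hKconv : Convex ℝ K := by
    rintro v ⟨X, hXm, hX1, hXfin, hXv⟩ v' ⟨Y, hYm, hY1, hYfin, hYv⟩ a b ha hb hab
    refine ⟨fun ω => ENNReal.ofReal a * X ω + ENNReal.ofReal b * Y ω,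
      (measurable_const.mul hXm).add (measurable_const.mul hYm), ?_, ?_, ?_⟩
    · rw [lintegral_add_left (hXm.const_mul _), lintegral_const_mul _ hXm,
        lintegral_const_mul _ hYm, hX1, hY1, mul_one, mul_one,
        ← ENNReal.ofReal_add ha hb, hab, ENNReal.ofReal_one]
    · intro i
      rw [lintegral_add_left (hXm.const_mul _), lintegral_const_mul _ hXm,
        lintegral_const_mul _ hYm]
      exact ENNReal.add_ne_top.2 ⟨ENNReal.mul_ne_top ENNReal.ofReal_ne_top (hXfin i),
        ENNReal.mul_ne_top ENNReal.ofReal_ne_top (hYfin i)⟩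
    · intro i
      rw [lintegral_add_left (hXm.const_mul _), lintegral_const_mul _ hXm,
        lintegral_const_mul _ hYm, ENNReal.toReal_add
          (ENNReal.mul_ne_top ENNReal.ofReal_ne_top (hXfin i))
          (ENNReal.mul_ne_top ENNReal.ofReal_ne_top (hYfin i)),
        ENNReal.toReal_mul, ENNReal.toReal_mul, ENNReal.toReal_ofReal ha,
        ENNReal.toReal_ofReal hb]
      simp only [Pi.add_apply, Pi.smul_apply, smul_eq_mul]
      rw [hXv i, hYv i]
  have hdisj : Disjoint U K := by
    rw [Set.disjoint_left]
    rintro v hvU ⟨X, hXm, hX1, hXfin, hXv⟩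
    set c := Finset.univ.sup (fun i => ∫⁻ ω, X ω ∂(Ps i)) with hc
    have hclt : c < 1 := by
      rw [hc, Finset.sup_lt_iff (by norm_num : (⊥:ℝ≥0∞) < 1)]
      intro i _
      have h1 := hvU i
      rw [hXv i] at h1
      exact (ENNReal.toReal_lt_toReal (hXfin i) ENNReal.one_ne_top).mp (by simpa using h1)
    have := key X hXm c (fun i => hc ▸ Finset.le_sup (f := fun j => ∫⁻ ω, X ω ∂(Ps j)) (Finset.mem_univ i))
    rw [hX1] at this
    exact absurd (lt_of_le_of_lt this hclt) (lt_irrefl 1)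
  -- K nonempty
  have hPuniv_ne : P Set.univ ≠ ∞ := measure_ne_top P _
  have hPsfin : ∀ i (B : Set Ω), Ps i B ≠ ∞ := fun i B => by
    haveI := hprob _ (hPs i); exact measure_ne_top _ _
  have hKne : K.Nonempty := by
    refine ⟨fun i => ((P Set.univ)⁻¹ * Ps i Set.univ).toReal,
      fun _ => (P Set.univ)⁻¹, measurable_const, ?_, ?_, fun i => by rw [lintegral_const]⟩
    · rw [lintegral_const, ENNReal.inv_mul_cancel hP0 hPuniv_ne]
    · intro i
      rw [lintegral_const]
      exact ENNReal.mul_ne_top (ENNReal.inv_ne_top.2 hP0) (hPsfin i _)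
  obtain ⟨f, c, hU, hK⟩ := geometric_hahn_banach_open hUconv hUopen hKconv hdisj
  classical
  set w : Fin n → ℝ := fun i => f (fun j => if i = j then 1 else 0) with hwdef
  have hrep : ∀ v : Fin n → ℝ, f v = ∑ i, v i * w i := by
    intro v
    conv_lhs => rw [pi_eq_sum_univ v]
    rw [map_sum]
    exact Finset.sum_congr rfl fun i _ => by rw [f.map_smul, smul_eq_mul]
  have hc0 : 0 < c := by
    have h0 : (0 : Fin n → ℝ) ∈ U := fun i => by norm_num
    have := hU 0 h0
    simpa using this
  have hwpos : ∀ i, 0 ≤ w i := by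
    intro j
    by_contra hneg
    push_neg at hneg
    set t : ℝ := (c + 1) / (-w j) with ht
    have htpos : 0 < t := div_pos (by linarith) (by linarith)
    set v : Fin n → ℝ := fun k => if j = k then -t else 0 with hv
    have hvU : v ∈ U := by
      intro k
      by_cases h : j = k <;> simp [hv, h] <;> linarith
    have hfv : f v = c + 1 := by
      have : v = (-t) • (fun k => if j = k then (1:ℝ) else 0) := by
        funext k; by_cases h : j = k <;> simp [hv, h]
      rw [this, f.map_smul, smul_eq_mul]
      show -t * w j = c + 1
      rw [ht]
      field_simp
      exact div_self (show w j ≠ 0 by linarith)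
    have := hU v hvU
    rw [hfv] at this
    linarith
  set s : ℝ := ∑ i, w i with hs
  have hsc : s ≤ c := by
    by_contra h
    push_neg at h
    have hspos : 0 < s := lt_trans hc0 h
    set r : ℝ := (c + s) / (2 * s) with hr
    have hr1 : r < 1 := by rw [hr, div_lt_one (by linarith)]; linarith
    have hvU : (fun _ : Fin n => r) ∈ U := fun i => hr1
    have := hU _ hvU
    rw [hrep] at this
    have hfr : ∑ i, r * w i = r * s := by rw [← Finset.mul_sum, hs]
    rw [hfr, hr] at this
    have : (c + s) / 2 < c := by
      have h2 : (c + s) / (2 * s) * s = (c + s) / 2 := by field_simp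
      linarith [h2 ▸ this]
    linarith
  have hspos : 0 < s := by
    rcases hKne with ⟨v₀, hv₀⟩
    have hcv := hK v₀ hv₀
    rw [hrep] at hcv
    by_contra h
    push_neg at h
    have hzero : ∀ i ∈ Finset.univ, w i = 0 := by
      rw [← Finset.sum_eq_zero_iff_of_nonneg (fun i _ => hwpos i)]
      exact le_antisymm (hs ▸ h) (Finset.sum_nonneg fun i _ => hwpos i)
    have : ∑ i, v₀ i * w i = 0 :=
      Finset.sum_eq_zero fun i hi => by rw [hzero i hi, mul_zero]
    rw [this] at hcv
    linarith
  -- the dominating measure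
  refine ⟨∑ i, ENNReal.ofReal (w i / s) • Ps i,
    ⟨n, fun i => ENNReal.ofReal (w i / s), Ps, hPs, ?_, rfl⟩, ?_⟩
  · rw [← ENNReal.ofReal_sum_of_nonneg (fun i _ => div_nonneg (hwpos i) hspos.le),
      ← Finset.sum_div, ← hs, div_self hspos.ne', ENNReal.ofReal_one]
  · intro A hA
    rcases eq_or_ne (P A) 0 with hPA | hPA
    · rw [hPA]; exact zero_le
    have hPAfin : P A ≠ ∞ := measure_ne_top P A
    have hPAtop : (P A)⁻¹ ≠ ∞ := ENNReal.inv_ne_top.2 hPA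
    -- the element of K given by the scaled indicator
    have hvK : (fun i => ((P A)⁻¹ * Ps i A).toReal) ∈ K := by
      refine ⟨fun ω => (P A)⁻¹ * A.indicator 1 ω,
        measurable_const.mul ((measurable_one (α := ℝ≥0∞)).indicator hA), ?_, ?_, ?_⟩
      · rw [lintegral_const_mul _ ((measurable_one (α := ℝ≥0∞)).indicator hA),
          lintegral_indicator_one hA, ENNReal.inv_mul_cancel hPA hPAfin]
      · intro i
        rw [lintegral_const_mul _ ((measurable_one (α := ℝ≥0∞)).indicator hA),
          lintegral_indicator_one hA]
        exact ENNReal.mul_ne_top hPAtop (hPsfin i _)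
      · intro i
        rw [lintegral_const_mul _ ((measurable_one (α := ℝ≥0∞)).indicator hA),
          lintegral_indicator_one hA]
    have hineq := hK _ hvK
    rw [hrep] at hineq
    have h1 : s ≤ ∑ i, ((P A)⁻¹ * Ps i A).toReal * w i := le_trans hsc hineq
    have h2 : ∀ i, ((P A)⁻¹ * Ps i A).toReal * w i
        = (P A).toReal⁻¹ * ((Ps i A).toReal * w i) := by
      intro i
      rw [ENNReal.toReal_mul, ENNReal.toReal_inv, mul_assoc]
    have hPAt : 0 < (P A).toReal := ENNReal.toReal_pos hPA hPAfin
    set T : ℝ := ∑ i, (Ps i A).toReal * w i with hT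
    have h3 : s ≤ (P A).toReal⁻¹ * T := by
      rw [hT, Finset.mul_sum]
      exact le_of_le_of_eq h1 (Finset.sum_congr rfl fun i _ => h2 i)
    have h4 : s * (P A).toReal ≤ T := by
      have := mul_le_mul_of_nonneg_right h3 hPAt.le
      rwa [mul_comm ((P A).toReal⁻¹) T, mul_assoc, inv_mul_cancel₀ hPAt.ne', mul_one] at this
    -- compute (P' A).toReal
    have hsum_apply : (∑ i, ENNReal.ofReal (w i / s) • Ps i) A
        = ∑ i, ENNReal.ofReal (w i / s) * Ps i A := by
      rw [Measure.finset_sum_apply]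
      exact Finset.sum_congr rfl fun i _ => rfl
    have hterm_fin : ∀ i ∈ Finset.univ, ENNReal.ofReal (w i / s) * Ps i A ≠ ∞ :=
      fun i _ => ENNReal.mul_ne_top ENNReal.ofReal_ne_top (hPsfin i _)
    have hP'fin : (∑ i, ENNReal.ofReal (w i / s) • Ps i) A ≠ ∞ := by
      rw [hsum_apply]
      exact (ENNReal.sum_lt_top.2 fun i hi => lt_top_iff_ne_top.2 (hterm_fin i hi)).ne
    rw [← ENNReal.toReal_le_toReal hPAfin hP'fin, hsum_apply,
      ENNReal.toReal_sum hterm_fin]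
    have h5 : ∑ i, (ENNReal.ofReal (w i / s) * Ps i A).toReal
        = s⁻¹ * T := by
      rw [hT, Finset.mul_sum]
      refine Finset.sum_congr rfl fun i _ => ?_
      rw [ENNReal.toReal_mul, ENNReal.toReal_ofReal (div_nonneg (hwpos i) hspos.le),
        div_eq_inv_mul, mul_assoc]
      ring
    rw [h5]
    have := mul_le_mul_of_nonneg_left h4 (inv_nonneg.2 hspos.le)
    rwa [← mul_assoc, inv_mul_cancel₀ hspos.ne', one_mul] at this

/-- For finite `Pfam`, the effective null consists exactly of the nonnegative
finite measures set-wise dominated by an element of the convex hull of `Pfam`;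
in particular, its probability measures are exactly the convex hull of `Pfam`. -/
theorem peff_of_finite_null (Pfam : Set (Measure Ω)) (hne : Pfam.Nonempty)
    (hfin : Pfam.Finite)
    (hprob : ∀ P ∈ Pfam, IsProbabilityMeasure P) :
    Peff Pfam =
      {P | IsFiniteMeasure P ∧
        ∃ P' ∈ convComb Pfam, ∀ A, MeasurableSet A → P A ≤ P' A} ∧
    {P ∈ Peff Pfam | IsProbabilityMeasure P} = convComb Pfam := by
  have h1 : Peff Pfam = {P | IsFiniteMeasure P ∧
      ∃ P' ∈ convComb Pfam, ∀ A, MeasurableSet A → P A ≤ P' A} := by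
    ext P
    constructor
    · rintro ⟨hPf, hP⟩
      exact ⟨hPf, hard_dir hne hfin hprob hPf hP⟩
    · rintro ⟨hPf, P', hP', hdom⟩
      exact mem_peff_of_dom hPf hP' hdom
  refine ⟨h1, ?_⟩
  ext P
  simp only [Set.mem_sep_iff, Set.mem_setOf_eq]
  constructor
  · rintro ⟨hPeff, hprobP⟩
    rw [h1] at hPeff
    obtain ⟨hPf, Q, hQ, hdom⟩ := hPeff
    have hQprob := convComb_prob hprob hQ
    have hPQ : P = Q := by
      apply Measure.ext
      intro A hA
      have hd1 := hdom A hA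
      have hd2 := hdom Aᶜ hA.compl
      have e1 : P A + P Aᶜ = 1 := by
        rw [measure_add_measure_compl hA, hprobP.measure_univ]
      have e2 : Q A + Q Aᶜ = 1 := by
        rw [measure_add_measure_compl hA, hQprob.measure_univ]
      by_contra hne'
      have hlt : P A < Q A := lt_of_le_of_ne hd1 hne'
      have hfin1 : P Aᶜ ≠ ⊤ := measure_ne_top P _
      have : P A + P Aᶜ < Q A + Q Aᶜ :=
        ENNReal.add_lt_add_of_lt_of_le hfin1 hlt hd2
      rw [e1, e2] at this
      exact lt_irrefl _ this
    rw [hPQ]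
    exact hQ
  · intro hQ
    have hp := convComb_prob hprob hQ
    haveI := hp
    exact ⟨mem_peff_of_dom inferInstance hQ (fun A hA => le_rfl), hp⟩
end

section
/- Assume Q ≪ 𝒫 and that Q and all elements of 𝒫 are absolutely continuous with respect to a probability measure μ; identify measures with their μ-densities (so p = dP/dμ, p* = dP*/dμ, q = dQ/dμ). Let p* ∈ 𝒫_eff be equivalent to Q. Then the condition 'p* is the density of the RIPr' is equivalent to each of: (a) ∫ (p/p*) dQ ≤ 1 for all p ∈ 𝒫; and (b) ∫ log(((1−t)p* + tp)/p*) dQ ≤ 0 for all t ∈ (0,1) and all p ∈ 𝒫. In either case, p* is the density of the RIPr. -/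
open MeasureTheory ENNReal Filter Set Topology

variable {Ω : Type*} [MeasurableSpace Ω]

/-- Ratio of extended nonnegative reals with the convention `∞/∞ = 1`
(and `x/∞ = 0`, `∞/x = ∞` for finite `x`). -/
noncomputable def ERatio (x y : ℝ≥0∞) : ℝ≥0∞ := if x = ⊤ ∧ y = ⊤ then 1 else x / y

/-- `Xs` is a numeraire for null `Pfam` and alternative `Q`. -/
def IsNumeraire (Pfam : Set (Measure Ω)) (Q : Measure Ω) (Xs : Ω → ℝ≥0∞) : Prop :=
  IsEVar Pfam Xs ∧ (∀ᵐ ω ∂Q, 0 < Xs ω) ∧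
    ∀ X, IsEVar Pfam X → ∫⁻ ω, ERatio (X ω) (Xs ω) ∂Q ≤ 1

/-- `Q` is absolutely continuous with respect to the family `Pfam`. -/
def ACFam (Q : Measure Ω) (Pfam : Set (Measure Ω)) : Prop :=
  ∀ A, MeasurableSet A → (∀ P ∈ Pfam, P A = 0) → Q A = 0

/-- Positive part of an extended real, as an extended nonnegative real. -/
noncomputable def EReal.posPart (x : EReal) : ℝ≥0∞ :=
  if x = ⊤ then ⊤ else ENNReal.ofReal x.toReal

/-- `∫ log f dQ`, valued in `EReal`, interpreted as `-∞` whenever the negative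
part of `log f` has infinite integral. -/
noncomputable def logInt (Q : Measure Ω) (f : Ω → ℝ≥0∞) : EReal :=
  ((∫⁻ ω, (ENNReal.log (f ω)).posPart ∂Q : ℝ≥0∞) : EReal)
    - ((∫⁻ ω, (-(ENNReal.log (f ω))).posPart ∂Q : ℝ≥0∞) : EReal)

/-- Absolutely continuous part of `P` with respect to `Q`. -/
noncomputable def acPart (P Q : Measure Ω) : Measure Ω := Q.withDensity (P.rnDeriv Q)

/-- Relative entropy `H(Q ∣ P) = ∫ -log (dP^a/dQ) dQ`. -/
noncomputable def relEnt (Q P : Measure Ω) : EReal := - logInt Q (fun ω => P.rnDeriv Q ω)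


/-! ### Auxiliary lemmas -/

lemma eratio_ne_top' (x y : ℝ≥0∞) (hx : x ≠ ⊤) : ERatio x y = x * y⁻¹ := by
  simp only [ERatio, hx, false_and, if_false, div_eq_mul_inv]

lemma posPart_coe' (x : ℝ) : EReal.posPart ((x : ℝ) : EReal) = ENNReal.ofReal x := by
  simp [EReal.posPart]

lemma posPart_neg_coe' (x : ℝ) : EReal.posPart (-((x : ℝ) : EReal)) = ENNReal.ofReal (-x) := by
  rw [← EReal.coe_neg, posPart_coe']

lemma ereal_sub_nonpos' {A B : ℝ≥0∞} (h : A ≤ B) : (A : EReal) - (B : EReal) ≤ 0 := by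
  rw [EReal.sub_le_iff_le_add (Or.inl (EReal.coe_ennreal_ne_bot B))
    (Or.inr (by simp : (0:EReal) ≠ ⊥)), zero_add]
  exact EReal.coe_ennreal_le_coe_ennreal_iff.2 h

lemma ereal_sub_nonpos_rev' {A B : ℝ≥0∞} (h : (A : EReal) - (B : EReal) ≤ 0) : A ≤ B := by
  rw [EReal.sub_le_iff_le_add (Or.inl (EReal.coe_ennreal_ne_bot B))
    (Or.inr (by simp : (0:EReal) ≠ ⊥)), zero_add] at h
  exact EReal.coe_ennreal_le_coe_ennreal_iff.1 h

lemma lint_density_eq' (ν μ : Measure Ω) [SigmaFinite ν] [SigmaFinite μ] (hνμ : ν ≪ μ)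
    (h : Ω → ℝ≥0∞) (hm : Measurable h) :
    ∫⁻ ω, h ω ∂ν = ∫⁻ ω, ν.rnDeriv μ ω * h ω ∂μ := by
  nth_rewrite 1 [← Measure.withDensity_rnDeriv_eq ν μ hνμ]
  rw [lintegral_withDensity_eq_lintegral_mul μ (Measure.measurable_rnDeriv ν μ) hm]
  rfl

lemma lint_sub_one_le' {Q : Measure Ω} [IsProbabilityMeasure Q] {F : Ω → ℝ≥0∞}
    (hF : Measurable F) (h1 : ∫⁻ ω, F ω ∂Q ≤ 1) :
    ∫⁻ ω, (F ω - 1) ∂Q ≤ ∫⁻ ω, (1 - F ω) ∂Q := by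
  have hmin : ∫⁻ ω, min (F ω) 1 ∂Q ≠ ⊤ := by
    refine ne_top_of_le_ne_top (by simp : (1:ℝ≥0∞) ≠ ⊤) ?_
    calc ∫⁻ ω, min (F ω) 1 ∂Q ≤ ∫⁻ _, 1 ∂Q := lintegral_mono fun ω => min_le_right _ _
    _ = 1 := by simp
  have key : ∫⁻ ω, (F ω - 1) ∂Q + ∫⁻ ω, min (F ω) 1 ∂Q
      ≤ ∫⁻ ω, (1 - F ω) ∂Q + ∫⁻ ω, min (F ω) 1 ∂Q := by
    rw [← lintegral_add_right _ (hF.min measurable_const),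
      ← lintegral_add_right _ (hF.min measurable_const)]
    have e1 : ∀ ω, F ω - 1 + min (F ω) 1 = F ω := fun ω => tsub_add_min
    have e2 : ∀ ω, 1 - F ω + min (F ω) 1 = 1 := fun ω => by
      rw [min_comm]; exact tsub_add_min
    simp only [e1, e2]
    calc ∫⁻ ω, F ω ∂Q ≤ 1 := h1
    _ = ∫⁻ _, (1:ℝ≥0∞) ∂Q := by simp
  exact ENNReal.le_of_add_le_add_right hmin key
lemma klog_mono {x k k' : ℝ} (hx : 0 ≤ x) (hk : 0 < k) (hkk : k ≤ k') :
    k * Real.log (1 + x / k) ≤ k' * Real.log (1 + x / k') := by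
  have hk' : 0 < k' := hk.trans_le hkk
  have h1 : (0:ℝ) < 1 + x / k := by positivity
  have ha : (0:ℝ) ≤ k / k' := by positivity
  have hb : (0:ℝ) ≤ 1 - k / k' := by
    have : k / k' ≤ 1 := (div_le_one hk').2 hkk
    linarith
  have hab : k / k' + (1 - k / k') = 1 := by ring
  have hcc := strictConcaveOn_log_Ioi.concaveOn.2 (mem_Ioi.2 h1) (mem_Ioi.2 one_pos) ha hb hab
  have hk0 : k ≠ 0 := hk.ne'
  have hk0' : k' ≠ 0 := hk'.ne'
  simp only [smul_eq_mul, Real.log_one, mul_zero, add_zero, mul_one] at hcc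
  have heq : k / k' * (1 + x / k) + (1 - k / k') = 1 + x / k' := by
    field_simp
    ring
  rw [heq] at hcc
  calc k * Real.log (1 + x / k) = k' * (k / k' * Real.log (1 + x / k)) := by
        field_simp
  _ ≤ k' * Real.log (1 + x / k') := mul_le_mul_of_nonneg_left hcc hk'.le

lemma klog_tendsto (x : ℝ) :
    Tendsto (fun n : ℕ => ((n:ℝ)+1) * Real.log (1 + x / ((n:ℝ)+1))) atTop (𝓝 x) := by
  have h0 := Real.tendsto_mul_log_one_add_div_atTop x
  have h1 : Tendsto (fun n : ℕ => ((n:ℝ)+1)) atTop atTop :=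
    tendsto_atTop_add_const_right _ 1 tendsto_natCast_atTop_atTop
  exact h0.comp h1

lemma klog_le_one {x : ℝ} (hx : 0 < x) : x * Real.log (1 + 1 / x) ≤ 1 := by
  have h := Real.log_le_sub_one_of_pos (show (0:ℝ) < 1 + 1/x by positivity)
  have : Real.log (1 + 1/x) ≤ 1/x := by linarith
  calc x * Real.log (1 + 1/x) ≤ x * (1/x) := mul_le_mul_of_nonneg_left this hx.le
  _ = 1 := by field_simp

lemma klog_isup {x : ℝ} (hx : 0 ≤ x) :
    ⨆ n : ℕ, ENNReal.ofReal (((n:ℝ)+1) * Real.log (1 + x / ((n:ℝ)+1))) = ENNReal.ofReal x := by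
  have hmono : Monotone fun n : ℕ =>
      ENNReal.ofReal (((n:ℝ)+1) * Real.log (1 + x / ((n:ℝ)+1))) := by
    intro a b hab
    exact ENNReal.ofReal_le_ofReal (klog_mono hx (by positivity) (by
      have : (a:ℝ) ≤ b := Nat.cast_le.2 hab
      linarith))
  have ht : Tendsto (fun n : ℕ => ENNReal.ofReal (((n:ℝ)+1) * Real.log (1 + x / ((n:ℝ)+1))))
      atTop (𝓝 (ENNReal.ofReal x)) :=
    (ENNReal.continuous_ofReal.tendsto x).comp (klog_tendsto x)
  exact tendsto_nhds_unique (tendsto_atTop_iSup hmono) ht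

section mix
variable {Q μ Ps P : Measure Ω}
lemma mix_ae [SigmaFinite P] [SigmaFinite Ps] [SigmaFinite Q] [SigmaFinite μ]
    (hQμ : Q ≪ μ) (hPsμ : Ps ≪ μ) (hca : Q ≪ Ps) {t : ℝ} (ht : t ∈ Set.Ioo (0:ℝ) 1) :
    ∀ᵐ ω ∂Q, ERatio (ENNReal.ofReal (1-t) * Ps.rnDeriv μ ω + ENNReal.ofReal t * P.rnDeriv μ ω)
        (Ps.rnDeriv μ ω)
      = ENNReal.ofReal ((1-t) + t * (P.rnDeriv μ ω * (Ps.rnDeriv μ ω)⁻¹).toReal) := by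
  filter_upwards [hQμ.ae_le (Measure.rnDeriv_lt_top P μ), hQμ.ae_le (Measure.rnDeriv_lt_top Ps μ),
    hca.ae_le (Measure.rnDeriv_pos hPsμ)] with ω hp hps hps0
  set g : ℝ≥0∞ := P.rnDeriv μ ω * (Ps.rnDeriv μ ω)⁻¹ with hg
  have hgt : g ≠ ⊤ := (ENNReal.mul_lt_top hp (ENNReal.inv_lt_top.2 hps0)).ne
  have hnum : ENNReal.ofReal (1-t) * Ps.rnDeriv μ ω + ENNReal.ofReal t * P.rnDeriv μ ω ≠ ⊤ :=
    (ENNReal.add_lt_top.2 ⟨ENNReal.mul_lt_top ENNReal.ofReal_lt_top hps,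
      ENNReal.mul_lt_top ENNReal.ofReal_lt_top hp⟩).ne
  rw [eratio_ne_top' _ _ hnum, add_mul, mul_assoc, mul_assoc, ← hg,
    ENNReal.mul_inv_cancel hps0.ne' hps.ne, mul_one]
  rw [show g = ENNReal.ofReal g.toReal from (ENNReal.ofReal_toReal hgt).symm,
    ← ENNReal.ofReal_mul ht.1.le,
    ← ENNReal.ofReal_add (by linarith [ht.2] : (0:ℝ) ≤ 1 - t)
      (mul_nonneg ht.1.le ENNReal.toReal_nonneg)]
  simp [ENNReal.toReal_ofReal ENNReal.toReal_nonneg]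
lemma g_ae [SigmaFinite P] [SigmaFinite Ps] [SigmaFinite μ]
    (hQμ : Q ≪ μ) (hPsμ : Ps ≪ μ) (hca : Q ≪ Ps) :
    ∀ᵐ ω ∂Q, ERatio (P.rnDeriv μ ω) (Ps.rnDeriv μ ω)
      = ENNReal.ofReal ((P.rnDeriv μ ω * (Ps.rnDeriv μ ω)⁻¹).toReal) := by
  filter_upwards [hQμ.ae_le (Measure.rnDeriv_lt_top P μ), hQμ.ae_le (Measure.rnDeriv_lt_top Ps μ),
    hca.ae_le (Measure.rnDeriv_pos hPsμ)] with ω hp hps hps0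
  rw [eratio_ne_top' _ _ hp.ne,
    ENNReal.ofReal_toReal (ENNReal.mul_lt_top hp (ENNReal.inv_lt_top.2 hps0)).ne]
end mix

lemma numeraire_to_A (Pfam : Set (Measure Ω)) (hprob : ∀ P ∈ Pfam, IsProbabilityMeasure P)
    (Q : Measure Ω) [IsProbabilityMeasure Q]
    (μ : Measure Ω) [IsProbabilityMeasure μ]
    (hQμ : Q ≪ μ) (hPμ : ∀ P ∈ Pfam, P ≪ μ)
    (Ps : Measure Ω) (hPs : Ps ∈ Peff Pfam) (hac : Ps ≪ Q) (hca : Q ≪ Ps)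
    (h : ∃ Xs, IsNumeraire Pfam Q Xs ∧ Ps = Q.withDensity fun ω => (Xs ω)⁻¹) :
    ∀ P ∈ Pfam, ∫⁻ ω, ERatio (P.rnDeriv μ ω) (Ps.rnDeriv μ ω) ∂Q ≤ 1 := by
  haveI := hPs.1
  obtain ⟨Xs, hnum, hdens⟩ := h
  intro P hP
  haveI := hprob P hP
  have hXsm : Measurable Xs := hnum.1.1
  have hrd : Ps.rnDeriv Q =ᵐ[Q] fun ω => (Xs ω)⁻¹ := by
    rw [hdens]
    exact Measure.rnDeriv_withDensity Q hXsm.inv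
  have hkey : ∀ᵐ ω ∂Q, (Ps.rnDeriv μ ω)⁻¹ = Xs ω * (Q.rnDeriv μ ω)⁻¹ := by
    filter_upwards [hQμ.ae_le (Measure.rnDeriv_mul_rnDeriv hac), hrd,
      Measure.rnDeriv_pos hQμ, hQμ.ae_le (Measure.rnDeriv_lt_top Q μ)] with ω hch hrd hq0 hqt
    rw [← hch, Pi.mul_apply, hrd, ENNReal.mul_inv (Or.inr hqt.ne) (Or.inr hq0.ne'), inv_inv]
  have h1 : ∫⁻ ω, ERatio (P.rnDeriv μ ω) (Ps.rnDeriv μ ω) ∂Q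
      = ∫⁻ ω, P.rnDeriv μ ω * (Xs ω * (Q.rnDeriv μ ω)⁻¹) ∂Q := by
    refine lintegral_congr_ae ?_
    filter_upwards [hQμ.ae_le (Measure.rnDeriv_lt_top P μ), hkey] with ω hp hk
    rw [eratio_ne_top' _ _ hp.ne, hk]
  rw [h1, lint_density_eq' Q μ hQμ (fun ω => P.rnDeriv μ ω * (Xs ω * (Q.rnDeriv μ ω)⁻¹))
    ((Measure.measurable_rnDeriv P μ).mul (hXsm.mul (Measure.measurable_rnDeriv Q μ).inv))]
  have hle : ∀ ω, Q.rnDeriv μ ω * (P.rnDeriv μ ω * (Xs ω * (Q.rnDeriv μ ω)⁻¹))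
      ≤ P.rnDeriv μ ω * Xs ω := fun ω => by
    calc Q.rnDeriv μ ω * (P.rnDeriv μ ω * (Xs ω * (Q.rnDeriv μ ω)⁻¹))
        = (Q.rnDeriv μ ω * (Q.rnDeriv μ ω)⁻¹) * (P.rnDeriv μ ω * Xs ω) := by ring
    _ ≤ 1 * (P.rnDeriv μ ω * Xs ω) := by gcongr; exact ENNReal.mul_inv_le_one _
    _ = P.rnDeriv μ ω * Xs ω := one_mul _
  calc ∫⁻ ω, Q.rnDeriv μ ω * (P.rnDeriv μ ω * (Xs ω * (Q.rnDeriv μ ω)⁻¹)) ∂μ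
      ≤ ∫⁻ ω, P.rnDeriv μ ω * Xs ω ∂μ := lintegral_mono hle
  _ = ∫⁻ ω, Xs ω ∂P := (lint_density_eq' P μ (hPμ P hP) _ hXsm).symm
  _ ≤ 1 := hnum.1.2 P hP

lemma A_to_numeraire (Pfam : Set (Measure Ω)) (hprob : ∀ P ∈ Pfam, IsProbabilityMeasure P)
    (Q : Measure Ω) [IsProbabilityMeasure Q]
    (μ : Measure Ω) [IsProbabilityMeasure μ]
    (hQμ : Q ≪ μ) (hPμ : ∀ P ∈ Pfam, P ≪ μ)
    (Ps : Measure Ω) (hPs : Ps ∈ Peff Pfam) (hac : Ps ≪ Q) (hca : Q ≪ Ps)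
    (hA : ∀ P ∈ Pfam, ∫⁻ ω, ERatio (P.rnDeriv μ ω) (Ps.rnDeriv μ ω) ∂Q ≤ 1) :
    ∃ Xs, IsNumeraire Pfam Q Xs ∧ Ps = Q.withDensity fun ω => (Xs ω)⁻¹ := by
  haveI := hPs.1
  set Xs : Ω → ℝ≥0∞ := fun ω => Q.rnDeriv μ ω * (Ps.rnDeriv μ ω)⁻¹ with hXs
  have hXsm : Measurable Xs :=
    (Measure.measurable_rnDeriv Q μ).mul (Measure.measurable_rnDeriv Ps μ).inv
  -- Xs⁻¹ agrees with Ps.rnDeriv Q a.e.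
  have hkey : (fun ω => (Xs ω)⁻¹) =ᵐ[Q] Ps.rnDeriv Q := by
    filter_upwards [hQμ.ae_le (Measure.rnDeriv_mul_rnDeriv hac),
      Measure.rnDeriv_pos hQμ, hQμ.ae_le (Measure.rnDeriv_lt_top Q μ),
      hQμ.ae_le (Measure.rnDeriv_lt_top Ps μ)] with ω hch hq0 hqt hpst
    have : (Xs ω)⁻¹ = (Q.rnDeriv μ ω)⁻¹ * Ps.rnDeriv μ ω := by
      rw [hXs, ENNReal.mul_inv (Or.inl hq0.ne') (Or.inl hqt.ne), inv_inv]
    rw [this, ← hch, Pi.mul_apply, mul_comm (Ps.rnDeriv Q ω), ← mul_assoc,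
      ENNReal.inv_mul_cancel hq0.ne' hqt.ne, one_mul]
  -- e-variable property
  have hev : IsEVar Pfam Xs := by
    refine ⟨hXsm, fun P hP => ?_⟩
    haveI := hprob P hP
    have h2 : ∫⁻ ω, Xs ω ∂P = ∫⁻ ω, P.rnDeriv μ ω * Xs ω ∂μ :=
      lint_density_eq' P μ (hPμ P hP) _ hXsm
    have h3 : ∫⁻ ω, ERatio (P.rnDeriv μ ω) (Ps.rnDeriv μ ω) ∂Q
        = ∫⁻ ω, Q.rnDeriv μ ω * (P.rnDeriv μ ω * (Ps.rnDeriv μ ω)⁻¹) ∂μ := by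
      rw [show ∫⁻ ω, ERatio (P.rnDeriv μ ω) (Ps.rnDeriv μ ω) ∂Q
          = ∫⁻ ω, P.rnDeriv μ ω * (Ps.rnDeriv μ ω)⁻¹ ∂Q from
        lintegral_congr_ae (by
          filter_upwards [hQμ.ae_le (Measure.rnDeriv_lt_top P μ)] with ω hp
          exact eratio_ne_top' _ _ hp.ne)]
      exact lint_density_eq' Q μ hQμ _
        ((Measure.measurable_rnDeriv P μ).mul (Measure.measurable_rnDeriv Ps μ).inv)
    rw [h2]
    calc ∫⁻ ω, P.rnDeriv μ ω * Xs ω ∂μ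
        = ∫⁻ ω, Q.rnDeriv μ ω * (P.rnDeriv μ ω * (Ps.rnDeriv μ ω)⁻¹) ∂μ := by
          refine lintegral_congr fun ω => ?_
          rw [hXs]; ring
    _ = ∫⁻ ω, ERatio (P.rnDeriv μ ω) (Ps.rnDeriv μ ω) ∂Q := h3.symm
    _ ≤ 1 := hA P hP
  -- a.s. positivity
  have hpos : ∀ᵐ ω ∂Q, 0 < Xs ω := by
    filter_upwards [Measure.rnDeriv_pos hQμ, hQμ.ae_le (Measure.rnDeriv_lt_top Ps μ)]
      with ω hq0 hpst
    exact ENNReal.mul_pos hq0.ne' (ENNReal.inv_ne_zero.2 hpst.ne)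
  -- Xs finite a.e.
  have hfin : ∀ᵐ ω ∂Q, Xs ω < ⊤ := by
    filter_upwards [hQμ.ae_le (Measure.rnDeriv_lt_top Q μ),
      hca.ae_le (Measure.rnDeriv_pos (hac.trans hQμ))] with ω hqt hps0
    exact ENNReal.mul_lt_top hqt (ENNReal.inv_lt_top.2 hps0)
  -- density identity
  have hdens : Ps = Q.withDensity fun ω => (Xs ω)⁻¹ := by
    rw [withDensity_congr_ae hkey, Measure.withDensity_rnDeriv_eq Ps Q hac]
  refine ⟨Xs, ⟨hev, hpos, fun X hX => ?_⟩, hdens⟩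
  -- numeraire inequality
  have h1 : ∫⁻ ω, ERatio (X ω) (Xs ω) ∂Q = ∫⁻ ω, X ω * Ps.rnDeriv Q ω ∂Q := by
    refine lintegral_congr_ae ?_
    filter_upwards [hfin, hkey] with ω hf hk
    rw [ERatio, if_neg (fun h => absurd h.2 hf.ne), div_eq_mul_inv, hk]
  rw [h1]
  have h2 : ∫⁻ ω, X ω * Ps.rnDeriv Q ω ∂Q = ∫⁻ ω, X ω ∂Ps := by
    nth_rewrite 2 [← Measure.withDensity_rnDeriv_eq Ps Q hac]
    rw [lintegral_withDensity_eq_lintegral_mul Q (Measure.measurable_rnDeriv Ps Q) hX.1]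
    exact lintegral_congr fun ω => mul_comm _ _
  rw [h2]
  exact hPs.2 X hX

lemma A_to_B (Q μ Ps P : Measure Ω) [IsProbabilityMeasure Q] [IsProbabilityMeasure μ]
    [SigmaFinite P] [SigmaFinite Ps]
    (hQμ : Q ≪ μ) (hPsμ : Ps ≪ μ) (hca : Q ≪ Ps)
    (hA1 : ∫⁻ ω, ERatio (P.rnDeriv μ ω) (Ps.rnDeriv μ ω) ∂Q ≤ 1)
    {t : ℝ} (ht : t ∈ Set.Ioo (0:ℝ) 1) :
    logInt Q (fun ω =>
      ERatio (ENNReal.ofReal (1-t) * Ps.rnDeriv μ ω + ENNReal.ofReal t * P.rnDeriv μ ω)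
        (Ps.rnDeriv μ ω)) ≤ 0 := by
  set r : Ω → ℝ := fun ω => (P.rnDeriv μ ω * (Ps.rnDeriv μ ω)⁻¹).toReal with hr
  have hrm : Measurable r :=
    ((Measure.measurable_rnDeriv P μ).mul (Measure.measurable_rnDeriv Ps μ).inv).ennreal_toReal
  have hrnn : ∀ ω, 0 ≤ r ω := fun ω => ENNReal.toReal_nonneg
  set c : Ω → ℝ := fun ω => (1-t) + t * r ω with hcdef
  have hcm : Measurable c := ((hrm.const_mul t).const_add (1-t))
  have hcpos : ∀ ω, 0 < c ω := fun ω => by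
    have := hrnn ω
    have := ht.1
    have := ht.2
    dsimp [c]
    nlinarith
  have hFae := mix_ae (P := P) hQμ hPsμ hca ht
  have hpos_ae : (fun ω => (ENNReal.log
      (ERatio (ENNReal.ofReal (1-t) * Ps.rnDeriv μ ω + ENNReal.ofReal t * P.rnDeriv μ ω)
        (Ps.rnDeriv μ ω))).posPart)
      =ᵐ[Q] fun ω => ENNReal.ofReal (Real.log (c ω)) := by
    filter_upwards [hFae] with ω h
    rw [h, ENNReal.log_ofReal_of_pos (hcpos ω), posPart_coe']
  have hneg_ae : (fun ω => (-(ENNReal.log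
      (ERatio (ENNReal.ofReal (1-t) * Ps.rnDeriv μ ω + ENNReal.ofReal t * P.rnDeriv μ ω)
        (Ps.rnDeriv μ ω)))).posPart)
      =ᵐ[Q] fun ω => ENNReal.ofReal (-Real.log (c ω)) := by
    filter_upwards [hFae] with ω h
    rw [h, ENNReal.log_ofReal_of_pos (hcpos ω), posPart_neg_coe']
  rw [logInt, lintegral_congr_ae hpos_ae, lintegral_congr_ae hneg_ae]
  apply ereal_sub_nonpos'
  -- main inequality between positive and negative parts
  have hint : ∫⁻ ω, ENNReal.ofReal (c ω) ∂Q ≤ 1 := by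
    have hg : ∫⁻ ω, ENNReal.ofReal (r ω) ∂Q ≤ 1 := by
      rw [← lintegral_congr_ae (g_ae (P := P) hQμ hPsμ hca)]
      exact hA1
    have hsplit : ∀ ω, ENNReal.ofReal (c ω)
        = ENNReal.ofReal (1-t) + ENNReal.ofReal t * ENNReal.ofReal (r ω) := fun ω => by
      rw [← ENNReal.ofReal_mul ht.1.le,
        ENNReal.ofReal_add (by linarith [ht.2] : (0:ℝ) ≤ 1-t) (mul_nonneg ht.1.le (hrnn ω))]
    calc ∫⁻ ω, ENNReal.ofReal (c ω) ∂Q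
        = ∫⁻ ω, (ENNReal.ofReal (1-t) + ENNReal.ofReal t * ENNReal.ofReal (r ω)) ∂Q :=
          lintegral_congr hsplit
    _ = ENNReal.ofReal (1-t) + ENNReal.ofReal t * ∫⁻ ω, ENNReal.ofReal (r ω) ∂Q := by
        rw [lintegral_add_left measurable_const, lintegral_const,
          lintegral_const_mul _ hrm.ennreal_ofReal]
        simp
    _ ≤ ENNReal.ofReal (1-t) + ENNReal.ofReal t * 1 := by gcongr
    _ = 1 := by
        rw [mul_one, ← ENNReal.ofReal_add (by linarith [ht.2] : (0:ℝ) ≤ 1-t) ht.1.le]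
        norm_num
  have hsub := lint_sub_one_le' hcm.ennreal_ofReal hint
  have hsub' : ∫⁻ ω, ENNReal.ofReal (c ω - 1) ∂Q ≤ ∫⁻ ω, ENNReal.ofReal (1 - c ω) ∂Q := by
    have e1 : ∀ ω, ENNReal.ofReal (c ω - 1) = ENNReal.ofReal (c ω) - 1 := fun ω => by
      rw [ENNReal.ofReal_sub _ (by norm_num : (0:ℝ) ≤ 1), ENNReal.ofReal_one]
    have e2 : ∀ ω, ENNReal.ofReal (1 - c ω) = 1 - ENNReal.ofReal (c ω) := fun ω => by
      rw [ENNReal.ofReal_sub _ (hcpos ω).le, ENNReal.ofReal_one]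
    rw [lintegral_congr e1, lintegral_congr e2]
    exact hsub
  have hI1 : ∫⁻ ω, ENNReal.ofReal (1 - c ω) ∂Q ≤ 1 := by
    calc ∫⁻ ω, ENNReal.ofReal (1 - c ω) ∂Q ≤ ∫⁻ _, 1 ∂Q := by
          refine lintegral_mono fun ω => ?_
          rw [← ENNReal.ofReal_one]
          exact ENNReal.ofReal_le_ofReal (by linarith [hcpos ω])
    _ = 1 := by simp
  have hpt : ∀ ω, ENNReal.ofReal (Real.log (c ω)) + ENNReal.ofReal (1 - c ω)
      ≤ ENNReal.ofReal (c ω - 1) + ENNReal.ofReal (-Real.log (c ω)) := fun ω => by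
    have hlog := Real.log_le_sub_one_of_pos (hcpos ω)
    exact add_le_add (ENNReal.ofReal_le_ofReal hlog)
      (ENNReal.ofReal_le_ofReal (by linarith))
  have hchain : ∫⁻ ω, ENNReal.ofReal (Real.log (c ω)) ∂Q + ∫⁻ ω, ENNReal.ofReal (1 - c ω) ∂Q
      ≤ ∫⁻ ω, ENNReal.ofReal (-Real.log (c ω)) ∂Q + ∫⁻ ω, ENNReal.ofReal (1 - c ω) ∂Q := by
    calc ∫⁻ ω, ENNReal.ofReal (Real.log (c ω)) ∂Q + ∫⁻ ω, ENNReal.ofReal (1 - c ω) ∂Q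
        = ∫⁻ ω, (ENNReal.ofReal (Real.log (c ω)) + ENNReal.ofReal (1 - c ω)) ∂Q := by
          rw [lintegral_add_right _ (g := fun ω => ENNReal.ofReal (1 - c ω)) ((measurable_const.sub hcm).ennreal_ofReal)]
    _ ≤ ∫⁻ ω, (ENNReal.ofReal (c ω - 1) + ENNReal.ofReal (-Real.log (c ω))) ∂Q :=
          lintegral_mono hpt
    _ = ∫⁻ ω, ENNReal.ofReal (c ω - 1) ∂Q + ∫⁻ ω, ENNReal.ofReal (-Real.log (c ω)) ∂Q := by
          rw [lintegral_add_left (f := fun ω => ENNReal.ofReal (c ω - 1)) ((hcm.sub measurable_const).ennreal_ofReal)]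
    _ ≤ ∫⁻ ω, ENNReal.ofReal (1 - c ω) ∂Q + ∫⁻ ω, ENNReal.ofReal (-Real.log (c ω)) ∂Q := by
          gcongr
    _ = ∫⁻ ω, ENNReal.ofReal (-Real.log (c ω)) ∂Q + ∫⁻ ω, ENNReal.ofReal (1 - c ω) ∂Q :=
          add_comm _ _
  exact ENNReal.le_of_add_le_add_right (ne_top_of_le_ne_top (by simp) hI1) hchain

lemma B_to_A (Q μ Ps P : Measure Ω) [IsProbabilityMeasure Q] [IsProbabilityMeasure μ]
    [SigmaFinite P] [SigmaFinite Ps]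
    (hQμ : Q ≪ μ) (hPsμ : Ps ≪ μ) (hca : Q ≪ Ps)
    (hB : ∀ t ∈ Set.Ioo (0:ℝ) 1,
      logInt Q (fun ω =>
        ERatio (ENNReal.ofReal (1-t) * Ps.rnDeriv μ ω + ENNReal.ofReal t * P.rnDeriv μ ω)
          (Ps.rnDeriv μ ω)) ≤ 0) :
    ∫⁻ ω, ERatio (P.rnDeriv μ ω) (Ps.rnDeriv μ ω) ∂Q ≤ 1 := by
  set r : Ω → ℝ := fun ω => (P.rnDeriv μ ω * (Ps.rnDeriv μ ω)⁻¹).toReal with hr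
  have hrm : Measurable r :=
    ((Measure.measurable_rnDeriv P μ).mul (Measure.measurable_rnDeriv Ps μ).inv).ennreal_toReal
  have hrnn : ∀ ω, 0 ≤ r ω := fun ω => ENNReal.toReal_nonneg
  have hφm : ∀ n : ℕ, Measurable fun ω =>
      ENNReal.ofReal (((n:ℝ)+1) * Real.log (1 + r ω / ((n:ℝ)+1))) := fun n =>
    (((Real.measurable_log.comp ((hrm.div_const _).const_add 1)).const_mul _)).ennreal_ofReal
  have key : ∀ n : ℕ,
      ∫⁻ ω, ENNReal.ofReal (((n:ℝ)+1) * Real.log (1 + r ω / ((n:ℝ)+1))) ∂Q ≤ 1 := by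
    intro n
    set k : ℝ := (n:ℝ)+1 with hk
    have hk0 : (0:ℝ) < k := by positivity
    set t : ℝ := 1/(k+1) with htdef
    have ht : t ∈ Set.Ioo (0:ℝ) 1 := by
      constructor
      · positivity
      · rw [htdef, div_lt_one (by positivity)]
        linarith
    have h1t : 1 - t = k/(k+1) := by
      rw [htdef]
      field_simp
      ring
    set c : Ω → ℝ := fun ω => (1-t) + t * r ω with hcdef
    have hcm : Measurable c := ((hrm.const_mul t).const_add (1-t))
    have hceq : ∀ ω, c ω = 1 - t + t * r ω := fun _ => rfl
    have hcpos : ∀ ω, 0 < c ω := fun ω => by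
      have h0 := hrnn ω
      have h1 := ht.1
      have h2 := ht.2
      rw [hceq ω]
      nlinarith
    set L : ℝ := Real.log (1 + 1/k) with hL
    have hLnn : 0 ≤ L := Real.log_nonneg (le_add_of_nonneg_right (by positivity))
    have hcfac : ∀ ω, c ω = (k/(k+1)) * (1 + r ω / k) := fun ω => by
      rw [hcdef, h1t, htdef]
      field_simp
    have hlogc : ∀ ω, Real.log (c ω) = -L + Real.log (1 + r ω / k) := fun ω => by
      rw [hcfac ω, Real.log_mul (by positivity) (by positivity), hL]
      have : k/(k+1) = (1 + 1/k)⁻¹ := by field_simp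
      rw [this, Real.log_inv]
    -- use hypothesis B at t
    have hbn := hB t ht
    have hFae := mix_ae (P := P) hQμ hPsμ hca ht
    have hpos_ae : (fun ω => (ENNReal.log
        (ERatio (ENNReal.ofReal (1-t) * Ps.rnDeriv μ ω + ENNReal.ofReal t * P.rnDeriv μ ω)
          (Ps.rnDeriv μ ω))).posPart)
        =ᵐ[Q] fun ω => ENNReal.ofReal (Real.log (c ω)) := by
      filter_upwards [hFae] with ω h
      rw [h, ENNReal.log_ofReal_of_pos (hcpos ω), posPart_coe']
    have hneg_ae : (fun ω => (-(ENNReal.log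
        (ERatio (ENNReal.ofReal (1-t) * Ps.rnDeriv μ ω + ENNReal.ofReal t * P.rnDeriv μ ω)
          (Ps.rnDeriv μ ω)))).posPart)
        =ᵐ[Q] fun ω => ENNReal.ofReal (-Real.log (c ω)) := by
      filter_upwards [hFae] with ω h
      rw [h, ENNReal.log_ofReal_of_pos (hcpos ω), posPart_neg_coe']
    rw [logInt, lintegral_congr_ae hpos_ae, lintegral_congr_ae hneg_ae] at hbn
    -- bound on the negative part
    have hnegle : ∫⁻ ω, ENNReal.ofReal (-Real.log (c ω)) ∂Q ≤ ENNReal.ofReal L := by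
      calc ∫⁻ ω, ENNReal.ofReal (-Real.log (c ω)) ∂Q ≤ ∫⁻ _, ENNReal.ofReal L ∂Q := by
            refine lintegral_mono fun ω => ENNReal.ofReal_le_ofReal ?_
            have hck : k/(k+1) ≤ c ω := by
              rw [hceq ω, ← h1t]
              have := mul_nonneg ht.1.le (hrnn ω)
              linarith
            have := Real.log_le_log (by positivity) hck
            rw [hlogc ω] at this ⊢
            have hlognn : 0 ≤ Real.log (1 + r ω / k) := Real.log_nonneg (by
              have := hrnn ω
              have : 0 ≤ r ω / k := by positivity
              linarith)
            linarith
      _ = ENNReal.ofReal L := by simp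
    have hAB : ∫⁻ ω, ENNReal.ofReal (Real.log (c ω)) ∂Q
        ≤ ∫⁻ ω, ENNReal.ofReal (-Real.log (c ω)) ∂Q := ereal_sub_nonpos_rev' hbn
    -- pointwise identity
    have hid : ∀ ω, ENNReal.ofReal (Real.log (1 + r ω / k)) + ENNReal.ofReal (-Real.log (c ω))
        = ENNReal.ofReal (Real.log (c ω)) + ENNReal.ofReal L := fun ω => by
      have hlognn : 0 ≤ Real.log (1 + r ω / k) := Real.log_nonneg (by
        have h0 : 0 ≤ r ω / k := by positivity
        linarith)
      rcases le_or_gt 0 (Real.log (c ω)) with hc | hc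
      · rw [ENNReal.ofReal_eq_zero.2 (show -Real.log (c ω) ≤ 0 by linarith), add_zero,
          ← ENNReal.ofReal_add hc hLnn]
        congr 1
        rw [hlogc ω]
        ring
      · rw [ENNReal.ofReal_eq_zero.2 (show Real.log (c ω) ≤ 0 from hc.le), zero_add,
          ← ENNReal.ofReal_add hlognn (show (0:ℝ) ≤ -Real.log (c ω) by linarith)]
        congr 1
        rw [hlogc ω]
        ring
    -- integrate the identity
    have hidint : ∫⁻ ω, ENNReal.ofReal (Real.log (1 + r ω / k)) ∂Q
        + ∫⁻ ω, ENNReal.ofReal (-Real.log (c ω)) ∂Q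
        = ∫⁻ ω, ENNReal.ofReal (Real.log (c ω)) ∂Q + ENNReal.ofReal L := by
      rw [← lintegral_add_right _ (g := fun ω => ENNReal.ofReal (-Real.log (c ω))) (hcm.log.neg.ennreal_ofReal),
        lintegral_congr hid,
        lintegral_add_right _ measurable_const, lintegral_const]
      simp
    have hS : ∫⁻ ω, ENNReal.ofReal (Real.log (1 + r ω / k)) ∂Q ≤ ENNReal.ofReal L := by
      have h2 : ∫⁻ ω, ENNReal.ofReal (Real.log (1 + r ω / k)) ∂Q
          + ∫⁻ ω, ENNReal.ofReal (-Real.log (c ω)) ∂Q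
          ≤ ENNReal.ofReal L + ∫⁻ ω, ENNReal.ofReal (-Real.log (c ω)) ∂Q := by
        rw [hidint, add_comm (ENNReal.ofReal L)]
        gcongr
      exact ENNReal.le_of_add_le_add_right (ne_top_of_le_ne_top ENNReal.ofReal_ne_top hnegle) h2
    -- multiply by k
    calc ∫⁻ ω, ENNReal.ofReal (k * Real.log (1 + r ω / k)) ∂Q
        = ∫⁻ ω, ENNReal.ofReal k * ENNReal.ofReal (Real.log (1 + r ω / k)) ∂Q :=
          lintegral_congr fun ω => ENNReal.ofReal_mul hk0.le
    _ = ENNReal.ofReal k * ∫⁻ ω, ENNReal.ofReal (Real.log (1 + r ω / k)) ∂Q :=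
          lintegral_const_mul _ (((hrm.div_const _).const_add 1).log.ennreal_ofReal)
    _ ≤ ENNReal.ofReal k * ENNReal.ofReal L := by gcongr
    _ = ENNReal.ofReal (k * L) := (ENNReal.ofReal_mul hk0.le).symm
    _ ≤ 1 := by
        rw [← ENNReal.ofReal_one]
        exact ENNReal.ofReal_le_ofReal (klog_le_one hk0)
  -- monotone convergence
  have hmono : Monotone fun n : ℕ => fun ω =>
      ENNReal.ofReal (((n:ℝ)+1) * Real.log (1 + r ω / ((n:ℝ)+1))) := by
    intro a b hab
    intro ω
    exact ENNReal.ofReal_le_ofReal (klog_mono (hrnn ω) (by positivity) (by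
      have : (a:ℝ) ≤ b := Nat.cast_le.2 hab
      linarith))
  calc ∫⁻ ω, ERatio (P.rnDeriv μ ω) (Ps.rnDeriv μ ω) ∂Q
      = ∫⁻ ω, ENNReal.ofReal (r ω) ∂Q := lintegral_congr_ae (g_ae (P := P) hQμ hPsμ hca)
  _ = ∫⁻ ω, ⨆ n : ℕ, ENNReal.ofReal (((n:ℝ)+1) * Real.log (1 + r ω / ((n:ℝ)+1))) ∂Q :=
      lintegral_congr fun ω => (klog_isup (hrnn ω)).symm
  _ = ⨆ n : ℕ, ∫⁻ ω, ENNReal.ofReal (((n:ℝ)+1) * Real.log (1 + r ω / ((n:ℝ)+1))) ∂Q :=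
      lintegral_iSup hφm hmono
  _ ≤ 1 := iSup_le key


/-- In the presence of a reference measure `μ`, for `Ps ∈ Peff` equivalent to `Q`,
being (the measure of) the RIPr is equivalent to the dual inequality tested only
on `Pfam`, and to the description-gain inequality tested on mixtures with `Pfam`. -/
theorem ripr_with_reference_measure (Pfam : Set (Measure Ω)) (hne : Pfam.Nonempty)
    (hprob : ∀ P ∈ Pfam, IsProbabilityMeasure P)
    (Q : Measure Ω) [IsProbabilityMeasure Q] (hQP : ACFam Q Pfam)
    (μ : Measure Ω) [IsProbabilityMeasure μ]
    (hQμ : Q ≪ μ) (hPμ : ∀ P ∈ Pfam, P ≪ μ)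
    (Ps : Measure Ω) (hPs : Ps ∈ Peff Pfam) (hac : Ps ≪ Q) (hca : Q ≪ Ps) :
    ((∃ Xs, IsNumeraire Pfam Q Xs ∧ Ps = Q.withDensity fun ω => (Xs ω)⁻¹) ↔
      ∀ P ∈ Pfam, ∫⁻ ω, ERatio (P.rnDeriv μ ω) (Ps.rnDeriv μ ω) ∂Q ≤ 1) ∧
    ((∃ Xs, IsNumeraire Pfam Q Xs ∧ Ps = Q.withDensity fun ω => (Xs ω)⁻¹) ↔
      ∀ t ∈ Set.Ioo (0:ℝ) 1, ∀ P ∈ Pfam,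
        logInt Q (fun ω =>
          ERatio (ENNReal.ofReal (1-t) * Ps.rnDeriv μ ω + ENNReal.ofReal t * P.rnDeriv μ ω)
            (Ps.rnDeriv μ ω)) ≤ 0) := by
  haveI := hPs.1
  have hPsμ : Ps ≪ μ := hac.trans hQμ
  have fwd : (∃ Xs, IsNumeraire Pfam Q Xs ∧ Ps = Q.withDensity fun ω => (Xs ω)⁻¹) →
      ∀ P ∈ Pfam, ∫⁻ ω, ERatio (P.rnDeriv μ ω) (Ps.rnDeriv μ ω) ∂Q ≤ 1 :=
    numeraire_to_A Pfam hprob Q μ hQμ hPμ Ps hPs hac hca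
  have bwd : (∀ P ∈ Pfam, ∫⁻ ω, ERatio (P.rnDeriv μ ω) (Ps.rnDeriv μ ω) ∂Q ≤ 1) →
      ∃ Xs, IsNumeraire Pfam Q Xs ∧ Ps = Q.withDensity fun ω => (Xs ω)⁻¹ :=
    A_to_numeraire Pfam hprob Q μ hQμ hPμ Ps hPs hac hca
  refine ⟨⟨fwd, bwd⟩, ⟨fun h t ht P hP => ?_, fun hb => ?_⟩⟩
  · haveI := hprob P hP
    exact A_to_B Q μ Ps P hQμ hPsμ hca (fwd h P hP) ht
  · refine bwd fun P hP => ?_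
    haveI := hprob P hP
    exact B_to_A Q μ Ps P hQμ hPsμ hca (fun t ht => hb t ht P hP)
end

section
/- Let Q be a finite nonnegative measure and 𝒫 a nonempty set of nonnegative measures on a measurable space (Ω, ℱ). Then there is a unique decomposition Q = Q^r + Q^s into nonnegative measures such that Q^r ≪ 𝒫 (every 𝒫-negligible event is Q^r-null) and Q^s is singular, meaning there exists a 𝒫-negligible event N ∈ ℱ with Q^s(N^c) = 0. The event N is unique up to Q-null sets and P-null sets for all P ∈ 𝒫; in particular, any other 𝒫-negligible event N' satisfies Q(N' \ N) = 0. -/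
/-!
The `Pfam`-negligible events form a σ-ideal, so since `Q` is finite there is a negligible `N`
of maximal `Q`-mass, obtained as a countable union along a maximizing sequence. Maximality
says exactly that every negligible event lies in `N` up to a `Q`-null set, which makes
`Q.restrict Nᶜ` vanish on negligible events. Conversely, for any decomposition
`Q = Qr' + Qs'` carried by a negligible `N'`, the set `N \ N'` is null for both summands, so
`N =ᵐ[Q] N'`, and the restrictions of `Q` to `N'` and `N'ᶜ` recover `Qs'` and `Qr'`.
-/

open MeasureTheory Set

variable {Ω : Type*} [MeasurableSpace Ω]

/-- An event is `Pfam`-negligible if it is null under every member of `Pfam`. -/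
def PNegl (Pfam : Set (Measure Ω)) (N : Set Ω) : Prop :=
  MeasurableSet N ∧ ∀ P ∈ Pfam, P N = 0

variable {Pfam : Set (Measure Ω)}

theorem pNegl_empty : PNegl Pfam (∅ : Set Ω) :=
  ⟨.empty, fun _ _ => measure_empty⟩

theorem PNegl.union {M N : Set Ω} (hM : PNegl Pfam M) (hN : PNegl Pfam N) :
    PNegl Pfam (M ∪ N) :=
  ⟨hM.1.union hN.1, fun P hP => measure_union_null (hM.2 P hP) (hN.2 P hP)⟩

theorem PNegl.iUnion {M : ℕ → Set Ω} (hM : ∀ n, PNegl Pfam (M n)) : PNegl Pfam (⋃ n, M n) :=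
  ⟨.iUnion fun n => (hM n).1, fun P hP => measure_iUnion_null fun n => (hM n).2 P hP⟩

theorem exists_pNegl_measure_eq_sSup (Q : Measure Ω) :
    ∃ N, PNegl Pfam N ∧ Q N = sSup (Q '' {M | PNegl Pfam M}) := by
  have hne : (Q '' {M | PNegl Pfam M}).Nonempty := ⟨Q ∅, ∅, pNegl_empty, rfl⟩
  obtain ⟨u, -, hu_tendsto, hu_mem⟩ := exists_seq_tendsto_sSup hne (OrderTop.bddAbove _)
  choose M hM hQM using hu_mem
  refine ⟨⋃ n, M n, PNegl.iUnion hM, le_antisymm (le_sSup ⟨_, PNegl.iUnion hM, rfl⟩) ?_⟩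
  refine le_of_tendsto' hu_tendsto fun n => ?_
  rw [← hQM n]
  exact measure_mono (subset_iUnion M n)

theorem exists_pNegl_forall_measure_diff_eq_zero (Q : Measure Ω) [IsFiniteMeasure Q] :
    ∃ N, PNegl Pfam N ∧ ∀ M, PNegl Pfam M → Q (M \ N) = 0 := by
  obtain ⟨N, hN, hQN⟩ := exists_pNegl_measure_eq_sSup (Pfam := Pfam) Q
  refine ⟨N, hN, fun M hM => ?_⟩
  have hmax : Q N + Q (M \ N) ≤ Q N + 0 :=
    calc Q N + Q (M \ N) = Q (N ∪ M) := by
          rw [← measure_union disjoint_sdiff_self_right (hM.1.diff hN.1), union_sdiff_self]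
      _ ≤ Q N := hQN ▸ le_sSup ⟨_, hN.union hM, rfl⟩
      _ = Q N + 0 := (add_zero _).symm
  exact nonpos_iff_eq_zero.mp ((ENNReal.add_le_add_iff_left (measure_ne_top Q N)).mp hmax)

namespace MeasureTheory.Measure

theorem restrict_eq_of_eq_add {Q R S : Measure Ω} {N : Set Ω} (hQ : Q = R + S) (hR : R N = 0)
    (hS : S Nᶜ = 0) : Q.restrict N = S ∧ Q.restrict Nᶜ = R := by
  subst hQ
  constructor
  · rw [restrict_add, restrict_eq_zero.mpr hR, zero_add,
      restrict_eq_self_of_ae_mem (ae_iff.mpr hS)]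
  · rw [restrict_add, restrict_eq_zero.mpr hS, add_zero,
      restrict_eq_self_of_ae_mem (s := Nᶜ) (compl_mem_ae_iff.mpr hR)]

theorem measure_diff_eq_zero_of_eq_add {Q R S : Measure Ω} {N N' : Set Ω} (hQ : Q = R + S)
    (hR : R N = 0) (hS : S N'ᶜ = 0) : Q (N \ N') = 0 := by
  rw [hQ, add_apply, measure_mono_null sdiff_subset hR,
    measure_mono_null (fun _ hx => hx.2) hS, add_zero]

end MeasureTheory.Measure

theorem generalized_lebesgue_decomposition_general
    (Q : Measure Ω) [IsFiniteMeasure Q]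
    (Pfam : Set (Measure Ω)) :
    ∃ Qr Qs : Measure Ω, ∃ N : Set Ω,
      Q = Qr + Qs ∧
      (∀ M : Set Ω, PNegl Pfam M → Qr M = 0) ∧
      PNegl Pfam N ∧ Qs Nᶜ = 0 ∧
      (∀ Qr' Qs' : Measure Ω, ∀ N' : Set Ω,
        Q = Qr' + Qs' → (∀ M : Set Ω, PNegl Pfam M → Qr' M = 0) →
        PNegl Pfam N' → Qs' N'ᶜ = 0 →
        Qr' = Qr ∧ Qs' = Qs ∧ Q (symmDiff N N') = 0 ∧ ∀ P ∈ Pfam, P (symmDiff N N') = 0) ∧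
      (∀ N' : Set Ω, PNegl Pfam N' → Q (N' \ N) = 0) := by
  obtain ⟨N, hN, hmax⟩ := exists_pNegl_forall_measure_diff_eq_zero (Pfam := Pfam) Q
  refine ⟨Q.restrict Nᶜ, Q.restrict N, N, ?_, fun M hM => ?_, hN, ?_,
    fun Qr' Qs' N' hQ hQr' hN' hQs' => ?_, hmax⟩
  · rw [add_comm, Measure.restrict_add_restrict_compl hN.1]
  · rw [Measure.restrict_apply hM.1, ← sdiff_eq]
    exact hmax M hM
  · rw [Measure.restrict_apply' hN.1, compl_inter_self, measure_empty]
  have hNN' : N =ᵐ[Q] N' :=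
    ae_eq_set.mpr ⟨Measure.measure_diff_eq_zero_of_eq_add hQ (hQr' N hN) hQs', hmax N' hN'⟩
  obtain ⟨hQs'_eq, hQr'_eq⟩ := Measure.restrict_eq_of_eq_add hQ (hQr' N' hN') hQs'
  refine ⟨?_, ?_, measure_symmDiff_eq_zero_iff.mpr hNN', fun P hP =>
    measure_mono_null symmDiff_subset_union ((hN.union hN').2 P hP)⟩
  · rw [← hQr'_eq, Measure.restrict_congr_set hNN'.compl]
  · rw [← hQs'_eq, Measure.restrict_congr_set hNN']

/-- Generalized Lebesgue decomposition of a finite measure `Q` with respect to a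
nonempty family `Pfam` of nonnegative measures: `Q = Qr + Qs` with `Qr`
vanishing on all `Pfam`-negligible events and `Qs` carried by a
`Pfam`-negligible event `N`; the pair `(Qr, Qs)` is unique, and `N` is unique up
to `Q`-null and `P`-null sets; moreover any other `Pfam`-negligible `N'`
satisfies `Q(N' \ N) = 0`. -/
theorem generalized_lebesgue_decomposition
    (Q : Measure Ω) [IsFiniteMeasure Q]
    (Pfam : Set (Measure Ω)) (hne : Pfam.Nonempty) :
    ∃ Qr Qs : Measure Ω, ∃ N : Set Ω,
      Q = Qr + Qs ∧
      (∀ M : Set Ω, PNegl Pfam M → Qr M = 0) ∧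
      PNegl Pfam N ∧ Qs Nᶜ = 0 ∧
      (∀ Qr' Qs' : Measure Ω, ∀ N' : Set Ω,
        Q = Qr' + Qs' → (∀ M : Set Ω, PNegl Pfam M → Qr' M = 0) →
        PNegl Pfam N' → Qs' N'ᶜ = 0 →
        Qr' = Qr ∧ Qs' = Qs ∧ Q (symmDiff N N') = 0 ∧ ∀ P ∈ Pfam, P (symmDiff N N') = 0) ∧
      (∀ N' : Set Ω, PNegl Pfam N' → Q (N' \ N) = 0) :=
  generalized_lebesgue_decomposition_general Q Pfam
end

section
/- Suppose every P ∈ 𝒫 is absolutely continuous with respect to a probability measure μ, and let f be a measurable [0,∞]-valued function such that f ≥ dP/dμ holds μ-almost everywhere for every P ∈ 𝒫. Then f ≥ dP/dμ holds μ-almost everywhere for every P ∈ 𝒫_eff (all elements of which are absolutely continuous with respect to μ). -/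
/-!
Domination `dQ/dμ ≤ f` μ-a.e. is equivalent to the linear bounds `∫_S f⁻¹ dQ ≤ μ S` for all
measurable `S`, since `∫_S f⁻¹ dQ = ∫_S (dQ/dμ) / f dμ`. Any bound `∫ g dQ ≤ c` holding on the
whole null hypothesis passes to the effective null, because `g / c` is an e-variable (for `c = 0`
it is `∞ · g`). Applied to `g = 1_S f⁻¹, c = μ S` this transfers the domination, and applied to
`g = 1_A, c = 0` for μ-null `A` it gives absolute continuity.
-/

open MeasureTheory ENNReal Filter Set

variable {Ω : Type*} [MeasurableSpace Ω]

lemma ENNReal.div_le_one_iff_le {a b : ℝ≥0∞} : a / b ≤ 1 ↔ a ≤ b := by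
  rw [ENNReal.div_le_iff_le_mul (Or.inr one_ne_top) (Or.inr one_ne_zero), one_mul]

lemma lintegral_div_const_le_one_iff {μ : Measure Ω} {g : Ω → ℝ≥0∞} (hg : Measurable g)
    (c : ℝ≥0∞) : ∫⁻ ω, g ω / c ∂μ ≤ 1 ↔ ∫⁻ ω, g ω ∂μ ≤ c := by
  simp_rw [div_eq_mul_inv]
  rw [lintegral_mul_const _ hg, ← div_eq_mul_inv, ENNReal.div_le_one_iff_le]

section EffectiveNull

variable {Pfam : Set (Measure Ω)} {P : Measure Ω}

lemma isEVar_div_const {g : Ω → ℝ≥0∞} (hg : Measurable g) {c : ℝ≥0∞}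
    (h : ∀ Q ∈ Pfam, ∫⁻ ω, g ω ∂Q ≤ c) : IsEVar Pfam (fun ω => g ω / c) :=
  ⟨hg.div_const c, fun Q hQ => (lintegral_div_const_le_one_iff hg c).2 (h Q hQ)⟩

lemma lintegral_le_of_mem_Peff {g : Ω → ℝ≥0∞} (hg : Measurable g) {c : ℝ≥0∞}
    (h : ∀ Q ∈ Pfam, ∫⁻ ω, g ω ∂Q ≤ c) (hP : P ∈ Peff Pfam) : ∫⁻ ω, g ω ∂P ≤ c :=
  (lintegral_div_const_le_one_iff hg c).1 (hP.2 _ (isEVar_div_const hg h))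

lemma absolutelyContinuous_of_mem_Peff {μ : Measure Ω} (hac : ∀ Q ∈ Pfam, Q ≪ μ)
    (hP : P ∈ Peff Pfam) : P ≪ μ := by
  refine Measure.AbsolutelyContinuous.mk fun A hA hμA => ?_
  have hnull : ∀ Q ∈ Pfam, ∫⁻ ω, A.indicator 1 ω ∂Q ≤ 0 := fun Q hQ => by
    simp [lintegral_indicator hA, hac Q hQ hμA]
  simpa [lintegral_indicator hA] using
    lintegral_le_of_mem_Peff (measurable_one.indicator hA) hnull hP

end EffectiveNull

lemma ae_rnDeriv_le_iff_forall_setLIntegral_inv_le {μ Q : Measure Ω} [SigmaFinite μ]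
    [Q.HaveLebesgueDecomposition μ] (hQ : Q ≪ μ) {f : Ω → ℝ≥0∞} (hf : Measurable f) :
    (∀ᵐ ω ∂μ, Q.rnDeriv μ ω ≤ f ω) ↔
      ∀ S, MeasurableSet S → ∫⁻ ω in S, (f ω)⁻¹ ∂Q ≤ μ S := by
  have hdensity : ∀ S, MeasurableSet S →
      ∫⁻ ω in S, (f ω)⁻¹ ∂Q = ∫⁻ ω in S, Q.rnDeriv μ ω / f ω ∂μ := fun S hS => by
    simp_rw [div_eq_mul_inv]
    exact (setLIntegral_rnDeriv_mul hQ hf.inv.aemeasurable hS).symm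
  simp_rw [← ENNReal.div_le_one_iff_le (a := Q.rnDeriv μ _)]
  constructor
  · intro hle S hS
    calc ∫⁻ ω in S, (f ω)⁻¹ ∂Q = ∫⁻ ω in S, Q.rnDeriv μ ω / f ω ∂μ := hdensity S hS
      _ ≤ ∫⁻ _ in S, 1 ∂μ := setLIntegral_mono_ae measurable_const.aemeasurable
          (hle.mono fun ω hω _ => hω)
      _ = μ S := setLIntegral_one S
  · intro hbound
    refine ae_le_of_forall_setLIntegral_le_of_sigmaFinite (g := 1)
      ((Measure.measurable_rnDeriv Q μ).div hf) fun S hS _ => ?_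
    rw [← hdensity S hS, Pi.one_def, setLIntegral_one]
    exact hbound S hS

theorem dominating_function_peff_general (Pfam : Set (Measure Ω))
    (hprob : ∀ P ∈ Pfam, IsProbabilityMeasure P)
    (μ : Measure Ω) [IsProbabilityMeasure μ] (hac : ∀ P ∈ Pfam, P ≪ μ)
    (f : Ω → ℝ≥0∞) (hf : Measurable f)
    (hdom : ∀ P ∈ Pfam, ∀ᵐ ω ∂μ, P.rnDeriv μ ω ≤ f ω) :
    (∀ P ∈ Peff Pfam, P ≪ μ) ∧
    ∀ P ∈ Peff Pfam, ∀ᵐ ω ∂μ, P.rnDeriv μ ω ≤ f ω := by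
  have habs : ∀ P ∈ Peff Pfam, P ≪ μ := fun P hP => absolutelyContinuous_of_mem_Peff hac hP
  refine ⟨habs, fun P hP => ?_⟩
  have := hP.1
  rw [ae_rnDeriv_le_iff_forall_setLIntegral_inv_le (habs P hP) hf]
  intro S hS
  rw [← lintegral_indicator hS]
  refine lintegral_le_of_mem_Peff (hf.inv.indicator hS) (fun Q hQ => ?_) hP
  have := hprob Q hQ
  rw [lintegral_indicator hS]
  exact (ae_rnDeriv_le_iff_forall_setLIntegral_inv_le (hac Q hQ) hf).1 (hdom Q hQ) S hS

/-- If `f` dominates (μ-a.e.) the `μ`-density of every element of `Pfam`, then it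
also dominates the `μ`-density of every element of the effective null, all of
whose elements are absolutely continuous with respect to `μ`. -/
theorem dominating_function_peff (Pfam : Set (Measure Ω)) (hne : Pfam.Nonempty)
    (hprob : ∀ P ∈ Pfam, IsProbabilityMeasure P)
    (μ : Measure Ω) [IsProbabilityMeasure μ] (hac : ∀ P ∈ Pfam, P ≪ μ)
    (f : Ω → ℝ≥0∞) (hf : Measurable f)
    (hdom : ∀ P ∈ Pfam, ∀ᵐ ω ∂μ, P.rnDeriv μ ω ≤ f ω) :
    (∀ P ∈ Peff Pfam, P ≪ μ) ∧
    ∀ P ∈ Peff Pfam, ∀ᵐ ω ∂μ, P.rnDeriv μ ω ≤ f ω :=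
  dominating_function_peff_general Pfam hprob μ hac f hf hdom
end
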